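/- arXiv:1506.02500 — 6 statements merged into one kernel-verified Lean document; each statement's English description precedes it below -/
import Mathlib

section
/- Let 0 < β < 1. There exist natural numbers h₁, h₂ depending only on β (and n) such that: for every cube Q = Q(x,l) ∈ F_β with 10Q ∉ F_β, if k₀ ∈ ℤ satisfies 2^{k₀-1} ≤ d_∞(x, Ω^c) < 2^{k₀}, then every point y in the cloud N_β(Q) satisfies 2^{k₀-h₁-1} ≤ d_∞(y, Ω^c) < 2^{k₀+h₂}. -/
open MeasureTheory Metric Set
open scoped ENNReal

noncomputable section

/-- The cube `Q(x,l)` with center `x` and half side length `l`, i.e. the closed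
ball of radius `l` in the sup metric `d_∞` on `Fin n → ℝ`. -/
def Cube {n : ℕ} (x : Fin n → ℝ) (l : ℝ) : Set (Fin n → ℝ) :=
  Metric.closedBall x l

/-- `Q(x,l)` belongs to the family `F_β` of cubes well inside `Ω`. -/
def MemF {n : ℕ} (Ω : Set (Fin n → ℝ)) (β : ℝ) (x : Fin n → ℝ) (l : ℝ) : Prop :=
  x ∈ Ω ∧ 0 < l ∧ l < β * Metric.infDist x Ωᶜ

/-- `w(E) = ∫_E w dx` for a weight `w`. -/
def wMeas {n : ℕ} (w : (Fin n → ℝ) → ℝ) (E : Set (Fin n → ℝ)) : ℝ≥0∞ :=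
  ∫⁻ y in E, ENNReal.ofReal (w y)

/-- The average `|Q|⁻¹ ∫_Q |f|`. -/
def avgI {n : ℕ} (f : (Fin n → ℝ) → ℝ) (Q : Set (Fin n → ℝ)) : ℝ≥0∞ :=
  (volume Q)⁻¹ * ∫⁻ y in Q, ENNReal.ofReal |f y|

/-- The local (uncentered) maximal function `M_β f`. -/
def locMax {n : ℕ} (Ω : Set (Fin n → ℝ)) (β : ℝ) (f : (Fin n → ℝ) → ℝ)
    (x : Fin n → ℝ) : ℝ≥0∞ :=
  ⨆ (c : Fin n → ℝ) (l : ℝ) (_ : MemF Ω β c l) (_ : x ∈ Cube c l), avgI f (Cube c l)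

/-- The centered local maximal function `M_β^c f`. -/
def locMaxC {n : ℕ} (Ω : Set (Fin n → ℝ)) (β : ℝ) (f : (Fin n → ℝ) → ℝ)
    (x : Fin n → ℝ) : ℝ≥0∞ :=
  ⨆ (l : ℝ) (_ : MemF Ω β x l), avgI f (Cube x l)

/-- A weight: a nonnegative (measurable) locally integrable function on `Ω`. -/
def IsWeight {n : ℕ} (Ω : Set (Fin n → ℝ)) (w : (Fin n → ℝ) → ℝ) : Prop :=
  (∀ x, 0 ≤ w x) ∧ Measurable w ∧ LocallyIntegrableOn w Ω

/-- `σ = v^{1-p'} = v^{-1/(p-1)}`. -/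
def sigW {n : ℕ} (v : (Fin n → ℝ) → ℝ) (p : ℝ) : (Fin n → ℝ) → ℝ :=
  fun y => v y ^ (-(1 / (p - 1)))

/-- The class `A_{p,q}^β`: `(u(Q)/|Q|)^{p/q} (σ(Q)/|Q|)^{p-1} ≤ C` for `Q ∈ F_β`. -/
def Apq {n : ℕ} (Ω : Set (Fin n → ℝ)) (β p q : ℝ) (u v : (Fin n → ℝ) → ℝ) : Prop :=
  ∃ C : ℝ≥0∞, C ≠ ⊤ ∧ ∀ x l, MemF Ω β x l →
    (wMeas u (Cube x l) / volume (Cube x l)) ^ (p / q) *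
      (wMeas (sigW v p) (Cube x l) / volume (Cube x l)) ^ (p - 1) ≤ C

/-- The class `D_β`: `w(2Q) ≤ C w(Q) < ∞` for all `Q ∈ F_β` with `2Q ∈ F_β`. -/
def Dbeta {n : ℕ} (Ω : Set (Fin n → ℝ)) (β : ℝ) (w : (Fin n → ℝ) → ℝ) : Prop :=
  ∃ C : ℝ≥0∞, C ≠ ⊤ ∧ ∀ x l, MemF Ω β x l → MemF Ω β x (2 * l) →
    wMeas w (Cube x (2 * l)) ≤ C * wMeas w (Cube x l) ∧ wMeas w (Cube x l) < ⊤

/-- The class `A_∞^β`: `w(E)/w(Q) ≤ c (|E|/|Q|)^δ` for measurable `E ⊆ Q ∈ F_β`. -/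
def AinfB {n : ℕ} (Ω : Set (Fin n → ℝ)) (β : ℝ) (w : (Fin n → ℝ) → ℝ) : Prop :=
  ∃ c δ : ℝ, 0 < c ∧ 0 < δ ∧ ∀ x l, MemF Ω β x l → ∀ E : Set (Fin n → ℝ),
    MeasurableSet E → E ⊆ Cube x l →
    wMeas w E ≤ ENNReal.ofReal c * (volume E / volume (Cube x l)) ^ δ * wMeas w (Cube x l)

/-- `M_β : L^p(v) → L^q(u)` is bounded. -/
def MaxBdd {n : ℕ} (Ω : Set (Fin n → ℝ)) (β p q : ℝ) (u v : (Fin n → ℝ) → ℝ) : Prop :=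
  ∃ C : ℝ≥0∞, C ≠ ⊤ ∧ ∀ f : (Fin n → ℝ) → ℝ,
    (∫⁻ x in Ω, (locMax Ω β f x) ^ q * ENNReal.ofReal (u x)) ^ (1 / q)
      ≤ C * (∫⁻ x in Ω, ENNReal.ofReal |f x| ^ p * ENNReal.ofReal (v x)) ^ (1 / p)

/-- `M_β^c : L^p(v) → L^q(u)` is bounded. -/
def MaxCBdd {n : ℕ} (Ω : Set (Fin n → ℝ)) (β p q : ℝ) (u v : (Fin n → ℝ) → ℝ) : Prop :=
  ∃ C : ℝ≥0∞, C ≠ ⊤ ∧ ∀ f : (Fin n → ℝ) → ℝ,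
    (∫⁻ x in Ω, (locMaxC Ω β f x) ^ q * ENNReal.ofReal (u x)) ^ (1 / q)
      ≤ C * (∫⁻ x in Ω, ENNReal.ofReal |f x| ^ p * ENNReal.ofReal (v x)) ^ (1 / p)

/-- The cloud `N_β(Q)` of the cube `Q = Q(x,l)`. -/
def cloud {n : ℕ} (Ω : Set (Fin n → ℝ)) (β : ℝ) (x : Fin n → ℝ) (l : ℝ) :
    Set (Fin n → ℝ) :=
  ⋃ (c : Fin n → ℝ) (r : ℝ) (_ : MemF Ω β c r)
    (_ : (Cube c r ∩ Cube x l).Nonempty), Cube c r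

/-- The center of the usual dyadic cube of side `2^(k+1)` indexed by `z`. -/
def dyCenter {n : ℕ} (k : ℤ) (z : Fin n → ℤ) : Fin n → ℝ :=
  fun i => (2 * (z i : ℝ) + 1) * (2:ℝ) ^ k

/-- The usual (half-open) dyadic cube of side `2^(k+1)` indexed by `z`;
its center is `dyCenter k z` and its half side length is `2^k`. -/
def dyCube {n : ℕ} (k : ℤ) (z : Fin n → ℤ) : Set (Fin n → ℝ) :=
  Set.univ.pi fun i => Ico ((z i : ℝ) * 2 ^ (k + 1)) (((z i : ℝ) + 1) * 2 ^ (k + 1))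

/-- `Q(x,l)` is a usual dyadic cube of `ℝ^n`. -/
def IsDyadic {n : ℕ} (x : Fin n → ℝ) (l : ℝ) : Prop :=
  ∃ (k : ℤ) (z : Fin n → ℤ), l = (2:ℝ) ^ k ∧ x = dyCenter k z

/-- `W` is a covering `W_t` of `Ω` as in the covering lemma: a covering of `Ω`
by pairwise disjoint dyadic cubes `R ∈ F_β` with `10R ∈ F_β` and
`2^{-t-3} d(x_R,Ω^c) ≤ l_R ≤ 2^{-t-1} d(x_R,Ω^c)`, and such that at most `M`
cubes of `W` meet the cloud of any `Q ∈ F_β` with `10Q ∉ F_β`. -/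
def IsWt {n : ℕ} (Ω : Set (Fin n → ℝ)) (β : ℝ) (t : ℕ)
    (W : Set (ℤ × (Fin n → ℤ))) : Prop :=
  (Ω ⊆ ⋃ q ∈ W, dyCube q.1 q.2) ∧
  (W.PairwiseDisjoint fun q => dyCube q.1 q.2) ∧
  (∀ q ∈ W, MemF Ω β (dyCenter q.1 q.2) ((2:ℝ) ^ q.1) ∧
    MemF Ω β (dyCenter q.1 q.2) (10 * (2:ℝ) ^ q.1) ∧
    (2:ℝ) ^ (-(t:ℤ) - 3) * Metric.infDist (dyCenter q.1 q.2) Ωᶜ ≤ (2:ℝ) ^ q.1 ∧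
    (2:ℝ) ^ q.1 ≤ (2:ℝ) ^ (-(t:ℤ) - 1) * Metric.infDist (dyCenter q.1 q.2) Ωᶜ) ∧
  (∃ M : ℕ, ∀ x l, MemF Ω β x l → ¬ MemF Ω β x (10 * l) →
    {q ∈ W | (dyCube q.1 q.2 ∩ cloud Ω β x l).Nonempty}.Finite ∧
    {q ∈ W | (dyCube q.1 q.2 ∩ cloud Ω β x l).Nonempty}.ncard ≤ M)

/-- `W_{t,Q}`: the union of the cubes of `W` meeting the cloud of `Q = Q(x,l)`. -/
def WtQ {n : ℕ} (Ω : Set (Fin n → ℝ)) (β : ℝ) (W : Set (ℤ × (Fin n → ℤ)))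
    (x : Fin n → ℝ) (l : ℝ) : Set (Fin n → ℝ) :=
  ⋃ q ∈ {q ∈ W | (dyCube q.1 q.2 ∩ cloud Ω β x l).Nonempty}, dyCube q.1 q.2

/- The distance to `Ωᶜ` is 1-Lipschitz, so it varies by a factor in `(1-β, 1+β)` over a cube of
`F_β`. A cube of the cloud meets `Q` in a point `z`; comparing `y` with the centre `c` of its
cube, `c` with `z`, and `z` with `x` loses at most three such factors, and the dyadic exponents
`h₁`, `h₂` are chosen to absorb them. -/

section InfDist

variable {α : Type*} [PseudoMetricSpace α] {s : Set α} {β r l : ℝ} {c x y : α}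

theorem infDist_mem_Ioo_of_mem_closedBall (hr : r < β * infDist c s) (hy : y ∈ closedBall c r) :
    (1 - β) * infDist c s < infDist y s ∧ infDist y s < (1 + β) * infDist c s := by
  have hyc : dist y c ≤ r := mem_closedBall.mp hy
  have hcy : infDist c s ≤ infDist y s + dist c y := infDist_le_infDist_add_dist
  have hyc' : infDist y s ≤ infDist c s + dist y c := infDist_le_infDist_add_dist
  rw [dist_comm] at hcy
  constructor <;> linarith

theorem infDist_ratio_of_closedBall_inter_nonempty (hβ : β < 1)
    (hl : l < β * infDist x s) (hr : r < β * infDist c s) (hy : y ∈ closedBall c r)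
    (hcx : (closedBall c r ∩ closedBall x l).Nonempty) :
    (1 - β) ^ 2 / (1 + β) * infDist x s < infDist y s ∧
      infDist y s < (1 + β) ^ 2 / (1 - β) * infDist x s := by
  obtain ⟨z, hzc, hzx⟩ := hcx
  have hβ0 : 0 < β := by
    have : 0 < β * infDist c s := (nonempty_closedBall.mp ⟨y, hy⟩).trans_lt hr
    exact pos_of_mul_pos_left this infDist_nonneg
  have h1p : 0 < 1 + β := by linarith
  have h1m : 0 < 1 - β := by linarith
  obtain ⟨hzx₁, hzx₂⟩ := infDist_mem_Ioo_of_mem_closedBall hl hzx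
  obtain ⟨hzc₁, hzc₂⟩ := infDist_mem_Ioo_of_mem_closedBall hr hzc
  obtain ⟨hyc₁, hyc₂⟩ := infDist_mem_Ioo_of_mem_closedBall hr hy
  constructor
  · rw [div_mul_eq_mul_div, div_lt_iff₀ h1p]
    calc (1 - β) ^ 2 * infDist x s = (1 - β) * ((1 - β) * infDist x s) := by ring
      _ < (1 - β) * ((1 + β) * infDist c s) := mul_lt_mul_of_pos_left (hzx₁.trans hzc₂) h1m
      _ = (1 + β) * ((1 - β) * infDist c s) := by ring
      _ < infDist y s * (1 + β) := by rw [mul_comm]; gcongr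
  · rw [div_mul_eq_mul_div, lt_div_iff₀ h1m]
    calc infDist y s * (1 - β) < (1 + β) * infDist c s * (1 - β) := by gcongr
      _ = (1 + β) * ((1 - β) * infDist c s) := by ring
      _ < (1 + β) * ((1 + β) * infDist x s) := mul_lt_mul_of_pos_left (hzc₁.trans hzx₂) h1p
      _ = (1 + β) ^ 2 * infDist x s := by ring

end InfDist

theorem infDist_ratio_of_mem_cloud {n : ℕ} {Ω : Set (Fin n → ℝ)} {β l : ℝ} {x y : Fin n → ℝ}
    (hβ : β < 1) (hQ : MemF Ω β x l) (hy : y ∈ cloud Ω β x l) :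
    (1 - β) ^ 2 / (1 + β) * infDist x Ωᶜ < infDist y Ωᶜ ∧
      infDist y Ωᶜ < (1 + β) ^ 2 / (1 - β) * infDist x Ωᶜ := by
  simp only [cloud, mem_iUnion] at hy
  obtain ⟨c, r, ⟨-, -, hr⟩, hcx, hyc⟩ := hy
  exact infDist_ratio_of_closedBall_inter_nonempty hβ hQ.2.2 hr hyc hcx

theorem cloud_distance_bands_general {n : ℕ} (Ω : Set (Fin n → ℝ))
    (β : ℝ) (hβ0 : 0 < β) (hβ1 : β < 1) :
    ∃ h₁ h₂ : ℕ, ∀ x l, MemF Ω β x l → ¬ MemF Ω β x (10 * l) →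
      ∀ k₀ : ℤ, (2:ℝ) ^ (k₀ - 1) ≤ Metric.infDist x Ωᶜ →
        Metric.infDist x Ωᶜ < (2:ℝ) ^ k₀ →
        ∀ y ∈ cloud Ω β x l,
          (2:ℝ) ^ (k₀ - (h₁:ℤ) - 1) ≤ Metric.infDist y Ωᶜ ∧
          Metric.infDist y Ωᶜ < (2:ℝ) ^ (k₀ + (h₂:ℤ)) := by
  have h1m : 0 < 1 - β := by linarith
  obtain ⟨h₁, hh₁⟩ := exists_pow_lt_of_lt_one
    (div_pos (pow_pos h1m 2) (by linarith : 0 < 1 + β)) (by norm_num : (1 / 2 : ℝ) < 1)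
  obtain ⟨h₂, hh₂⟩ := pow_unbounded_of_one_lt ((1 + β) ^ 2 / (1 - β)) one_lt_two
  refine ⟨h₁, h₂, fun x l hQ _ k₀ hk₁ hk₂ y hy => ?_⟩
  obtain ⟨hlower, hupper⟩ := infDist_ratio_of_mem_cloud hβ1 hQ hy
  have hx : 0 ≤ infDist x Ωᶜ := infDist_nonneg
  constructor
  · refine le_of_lt ?_
    calc (2 : ℝ) ^ (k₀ - (h₁ : ℤ) - 1) = (1 / 2) ^ h₁ * 2 ^ (k₀ - 1) := by
          rw [sub_right_comm, zpow_sub₀ two_ne_zero, zpow_natCast, one_div_pow, div_eq_inv_mul,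
            one_div]
      _ ≤ (1 / 2) ^ h₁ * infDist x Ωᶜ := by gcongr
      _ ≤ (1 - β) ^ 2 / (1 + β) * infDist x Ωᶜ := by gcongr
      _ < infDist y Ωᶜ := hlower
  · calc infDist y Ωᶜ < (1 + β) ^ 2 / (1 - β) * infDist x Ωᶜ := hupper
      _ ≤ 2 ^ h₂ * infDist x Ωᶜ := by gcongr
      _ < 2 ^ h₂ * 2 ^ k₀ := by gcongr
      _ = 2 ^ (k₀ + (h₂ : ℤ)) := by rw [zpow_add₀ two_ne_zero, zpow_natCast, mul_comm]

/-- Lemma 2.2: there are `h₁ h₂ ∈ ℕ`, depending only on `β`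
(and `n`), such that for every `Q = Q(x,l) ∈ F_β` with `10Q ∉ F_β`, if
`2^{k₀-1} ≤ d(x,Ω^c) < 2^{k₀}` then every `y ∈ N_β(Q)` satisfies
`2^{k₀-h₁-1} ≤ d(y,Ω^c) < 2^{k₀+h₂}`. -/
theorem cloud_distance_bands {n : ℕ} (Ω : Set (Fin n → ℝ))
    (hΩo : IsOpen Ω) (hΩne : Ω.Nonempty) (hΩpr : Ω ≠ Set.univ)
    (β : ℝ) (hβ0 : 0 < β) (hβ1 : β < 1) :
    ∃ h₁ h₂ : ℕ, ∀ x l, MemF Ω β x l → ¬ MemF Ω β x (10 * l) →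
      ∀ k₀ : ℤ, (2:ℝ) ^ (k₀ - 1) ≤ Metric.infDist x Ωᶜ →
        Metric.infDist x Ωᶜ < (2:ℝ) ^ k₀ →
        ∀ y ∈ cloud Ω β x l,
          (2:ℝ) ^ (k₀ - (h₁:ℤ) - 1) ≤ Metric.infDist y Ωᶜ ∧
          Metric.infDist y Ωᶜ < (2:ℝ) ^ (k₀ + (h₂:ℤ)) :=
  cloud_distance_bands_general Ω β hβ0 hβ1
end
end

section
/- Let Ω be a proper open subset of ℝ^n and 0 < β < 1. For each t ∈ ℕ with 2^{-t} ≤ β/5 there exists a covering W_t of Ω by pairwise disjoint dyadic cubes belonging to F_β such that: (i) if R = R(x_R, l_R) ∈ W_t then 10R ∈ F_β and 2^{-t-3}·d_∞(x_R, Ω^c) ≤ l_R ≤ 2^{-t-1}·d_∞(x_R, Ω^c); and (ii) there is a number M, depending only on β and t (and n), such that for every cube Q₀ ∈ F_β with 10Q₀ ∉ F_β the set W_t(Q₀) = {R ∈ W_t : R ∩ N_β(Q₀) ≠ ∅} has cardinality at most M. -/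
open MeasureTheory Metric Set
open scoped ENNReal

noncomputable section

/-!
The cubes of `W_t` are the maximal dyadic cubes `R` with `l_R ≤ 3·2^{-t-3} d(x_R, Ωᶜ)`, a
Whitney decomposition of `Ω`. Maximality makes them pairwise disjoint, and since the parent of `R`
violates the defining inequality, `2^{-t-3} d(x_R, Ωᶜ) ≤ l_R`. Every point `y` of the cloud of
`Q₀ = Q(x₀, l₀) ∈ F_β` satisfies `(1-β) d(y, x₀) ≤ 4 d(x₀, Ωᶜ)` and
`(1-β)² d(x₀, Ωᶜ) ≤ 2 d(y, Ωᶜ)`. So the cubes of `W_t` meeting the cloud are all large compared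
with `d(x₀, Ωᶜ)` and lie in a ball of radius comparable to `d(x₀, Ωᶜ)`; comparing volumes bounds
their number independently of `Q₀`.
-/

lemma abs_infDist_sub_infDist_le {X : Type*} [PseudoMetricSpace X] (s : Set X) (x y : X) :
    |infDist x s - infDist y s| ≤ dist x y := by
  simpa [Real.dist_eq] using (lipschitz_infDist_pt s).dist_le_mul x y

lemma infDist_mem_Ioo_of_dist_le {X : Type*} [PseudoMetricSpace X] {s : Set X} {c y : X}
    {r β : ℝ} (hr : r < β * infDist c s) (hy : dist y c ≤ r) :
    infDist y s ∈ Ioo ((1 - β) * infDist c s) ((1 + β) * infDist c s) := by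
  have h := abs_le.1 ((abs_infDist_sub_infDist_le s y c).trans hy)
  constructor <;> linarith [h.1, h.2]

lemma encard_mul_le_measure_of_pairwiseDisjoint {α ι : Type*} [MeasurableSpace α]
    (μ : Measure α) {W : Set ι} {s : ι → Set α} {t : Set α} {m : ℝ≥0∞}
    (hd : W.PairwiseDisjoint s) (hs : ∀ i ∈ W, MeasurableSet (s i)) (hst : ∀ i ∈ W, s i ⊆ t)
    (hm : ∀ i ∈ W, m ≤ μ (s i)) : W.encard * m ≤ μ t :=
  calc W.encard * m = ∑' _ : W, m := (ENNReal.tsum_set_const W m).symm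
    _ ≤ ∑' i : W, μ (s i) := ENNReal.tsum_le_tsum fun i => hm i i.2
    _ ≤ μ (⋃ i : W, s i) :=
      tsum_meas_le_meas_iUnion_of_disjoint μ (fun i => hs i i.2)
        fun i j hij => hd i.2 j.2 (Subtype.coe_ne_coe.2 hij)
    _ ≤ μ t := measure_mono (iUnion_subset fun i => hst i i.2)

section Dyadic

variable {n : ℕ}

def dyIndex (k : ℤ) (x : Fin n → ℝ) : Fin n → ℤ := fun i => ⌊x i / 2 ^ (k + 1)⌋

lemma mem_dyCube_iff_dyIndex_eq {k : ℤ} {z : Fin n → ℤ} {x : Fin n → ℝ} :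
    x ∈ dyCube k z ↔ dyIndex k x = z := by
  have h : (0 : ℝ) < 2 ^ (k + 1) := by positivity
  simp only [dyCube, mem_univ_pi, mem_Ico, funext_iff, dyIndex, Int.floor_eq_iff,
    le_div_iff₀ h, div_lt_iff₀ h]

lemma mem_dyCube_dyIndex (k : ℤ) (x : Fin n → ℝ) : x ∈ dyCube k (dyIndex k x) :=
  mem_dyCube_iff_dyIndex_eq.2 rfl

lemma dyIndex_succ (k : ℤ) (x : Fin n → ℝ) (i : Fin n) :
    dyIndex (k + 1) x i = dyIndex k x i / 2 := by
  have h : x i / 2 ^ (k + 1 + 1) = x i / 2 ^ (k + 1) / ((2 : ℕ) : ℝ) := by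
    rw [zpow_add_one₀ two_ne_zero, div_div]; norm_num
  simp only [dyIndex, h, Int.floor_div_natCast]
  rfl

lemma dyIndex_eq_of_le {k k' : ℤ} (hk : k ≤ k') {x y : Fin n → ℝ}
    (h : dyIndex k x = dyIndex k y) : dyIndex k' x = dyIndex k' y := by
  induction k', hk using Int.leInduction with
  | base => exact h
  | succ m _ ih => funext i; rw [dyIndex_succ, dyIndex_succ, ih]

lemma dyCenter_mem_dyCube (k : ℤ) (z : Fin n → ℤ) : dyCenter k z ∈ dyCube k z := by
  have h2k : (0 : ℝ) < 2 ^ k := by positivity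
  simp only [dyCube, dyCenter, mem_univ_pi, mem_Ico, zpow_add_one₀ (two_ne_zero' ℝ)]
  intro i
  constructor <;> nlinarith

lemma dist_dyCenter_le {k : ℤ} {z : Fin n → ℤ} {x : Fin n → ℝ} (hx : x ∈ dyCube k z) :
    dist x (dyCenter k z) ≤ 2 ^ k := by
  have h2k : (0 : ℝ) < 2 ^ k := by positivity
  rw [dist_pi_le_iff h2k.le]
  intro i
  simp only [dyCube, mem_univ_pi, mem_Ico, zpow_add_one₀ (two_ne_zero' ℝ)] at hx
  rw [Real.dist_eq, abs_le, dyCenter]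
  constructor <;> nlinarith [hx i]

lemma dist_le_of_mem_dyCube {k : ℤ} {z : Fin n → ℤ} {x y : Fin n → ℝ}
    (hx : x ∈ dyCube k z) (hy : y ∈ dyCube k z) : dist x y ≤ 2 * 2 ^ k := by
  linarith [dist_triangle_right x y (dyCenter k z), dist_dyCenter_le hx, dist_dyCenter_le hy]

lemma measurableSet_dyCube (k : ℤ) (z : Fin n → ℤ) : MeasurableSet (dyCube k z) :=
  MeasurableSet.univ_pi fun _ => measurableSet_Ico

lemma volume_dyCube (k : ℤ) (z : Fin n → ℤ) :
    volume (dyCube k z) = ENNReal.ofReal ((2 * 2 ^ k) ^ n) := by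
  rw [dyCube, Real.volume_pi_Ico, ENNReal.ofReal_pow (by positivity)]
  simp [zpow_add_one₀ (two_ne_zero' ℝ), add_mul, mul_comm]

theorem exists_maximal_dyadic_cover (P : ℤ → (Fin n → ℤ) → Prop) {S : Set (Fin n → ℝ)}
    (hP : ∀ x ∈ S, (∃ k, P k (dyIndex k x)) ∧ BddAbove {k | P k (dyIndex k x)}) :
    ∃ W : Set (ℤ × (Fin n → ℤ)), S ⊆ ⋃ q ∈ W, dyCube q.1 q.2 ∧
      W.PairwiseDisjoint (fun q => dyCube q.1 q.2) ∧
      ∀ q ∈ W, P q.1 q.2 ∧ ∀ x ∈ dyCube q.1 q.2, ¬ P (q.1 + 1) (dyIndex (q.1 + 1) x) := by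
  have hκ : ∀ x ∈ S, ∃ k, P k (dyIndex k x) ∧ ∀ k', P k' (dyIndex k' x) → k' ≤ k :=
    fun x hx => Int.exists_greatest_of_bdd (hP x hx).2 (hP x hx).1
  choose! κ hgood hmax using hκ
  -- If the cubes selected by `x` and `y` meet and `κ x ≤ κ y`, then the level `κ y` is also
  -- good for `x`, so the two levels agree by maximality.
  have meet_eq : ∀ x ∈ S, ∀ y ∈ S, κ x ≤ κ y → ∀ w, dyIndex (κ x) w = dyIndex (κ x) x →
      dyIndex (κ y) w = dyIndex (κ y) y → (κ x, dyIndex (κ x) x) = (κ y, dyIndex (κ y) y) := by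
    intro x hx y hy hle w hwx hwy
    have hxy : dyIndex (κ y) x = dyIndex (κ y) y := (dyIndex_eq_of_le hle hwx).symm.trans hwy
    have hκeq : κ x = κ y := le_antisymm hle (hmax x hx _ (hxy ▸ hgood y hy))
    rw [hκeq] at hwx ⊢
    rw [← hwx, hwy]
  refine ⟨(fun x => (κ x, dyIndex (κ x) x)) '' S,
    fun x hx => mem_biUnion (mem_image_of_mem _ hx) (mem_dyCube_dyIndex _ x), ?_, ?_⟩
  · rintro _ ⟨x, hx, rfl⟩ _ ⟨y, hy, rfl⟩ hne
    refine Set.disjoint_left.2 fun w hwx hwy => hne ?_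
    rw [mem_dyCube_iff_dyIndex_eq] at hwx hwy
    rcases le_total (κ x) (κ y) with h | h
    · exact meet_eq x hx y hy h w hwx hwy
    · exact (meet_eq y hy x hx h w hwy hwx).symm
  · rintro _ ⟨x, hx, rfl⟩
    refine ⟨hgood x hx, fun w hw hw1 => ?_⟩
    have hwx : dyIndex (κ x + 1) w = dyIndex (κ x + 1) x :=
      dyIndex_eq_of_le (Int.le_add_one le_rfl) (mem_dyCube_iff_dyIndex_eq.1 hw)
    linarith [hmax x hx _ (hwx ▸ hw1)]

end Dyadic

section Whitney

variable {n : ℕ}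

lemma whitney_levels_nonempty_bddAbove {s : Set (Fin n → ℝ)} {θ : ℝ} (hθ0 : 0 < θ)
    (hθ : θ ≤ 1 / 2) {x : Fin n → ℝ} (hx : 0 < infDist x s) :
    (∃ k : ℤ, (2 : ℝ) ^ k ≤ θ * infDist (dyCenter k (dyIndex k x)) s) ∧
      BddAbove {k : ℤ | (2 : ℝ) ^ k ≤ θ * infDist (dyCenter k (dyIndex k x)) s} := by
  have hc : ∀ k : ℤ, |infDist (dyCenter k (dyIndex k x)) s - infDist x s| ≤ 2 ^ k := fun k =>
    (abs_infDist_sub_infDist_le s _ _).trans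
      (dist_comm x _ ▸ dist_dyCenter_le (mem_dyCube_dyIndex k x))
  constructor
  · obtain ⟨k, hk, -⟩ := exists_mem_Ico_zpow (by positivity : 0 < θ * infDist x s / 2) one_lt_two
    refine ⟨k, ?_⟩
    nlinarith [mul_le_mul_of_nonneg_left (abs_le.1 (hc k)).1 hθ0.le,
      mul_le_mul_of_nonneg_right hθ (zpow_pos two_pos k).le]
  · obtain ⟨m, -, hm⟩ := exists_mem_Ico_zpow (by positivity : 0 < 2 * θ * infDist x s) one_lt_two
    refine ⟨m, fun k (hk : (2 : ℝ) ^ k ≤ _) => ?_⟩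
    have hk' : (2 : ℝ) ^ k < 2 ^ (m + 1) := by
      nlinarith [mul_le_mul_of_nonneg_left (abs_le.1 (hc k)).2 hθ0.le,
        mul_le_mul_of_nonneg_right hθ (zpow_pos two_pos k).le]
    have := (zpow_lt_zpow_iff_right₀ one_lt_two).1 hk'
    omega

theorem exists_whitney_dyadic_cover (s : Set (Fin n → ℝ)) {ε : ℝ} (hε0 : 0 < ε)
    (hε : ε ≤ 1 / 6) :
    ∃ W : Set (ℤ × (Fin n → ℤ)), {x | 0 < infDist x s} ⊆ ⋃ q ∈ W, dyCube q.1 q.2 ∧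
      W.PairwiseDisjoint (fun q => dyCube q.1 q.2) ∧
      ∀ q ∈ W, ε * infDist (dyCenter q.1 q.2) s ≤ 2 ^ q.1 ∧
        (2 : ℝ) ^ q.1 ≤ 3 * ε * infDist (dyCenter q.1 q.2) s := by
  obtain ⟨W, hcov, hdisj, hW⟩ :=
    exists_maximal_dyadic_cover (fun k z => (2 : ℝ) ^ k ≤ 3 * ε * infDist (dyCenter k z) s)
      fun x hx => whitney_levels_nonempty_bddAbove (by positivity) (by linarith) hx
  refine ⟨W, hcov, hdisj, fun q hq => ⟨?_, (hW q hq).1⟩⟩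
  set c := dyCenter q.1 q.2
  set c' := dyCenter (q.1 + 1) (dyIndex (q.1 + 1) c)
  have hparent : 3 * ε * infDist c' s < 2 ^ (q.1 + 1) :=
    not_le.1 ((hW q hq).2 c (dyCenter_mem_dyCube _ _))
  have hcc' : infDist c s ≤ infDist c' s + 2 ^ (q.1 + 1) := by
    linarith [infDist_le_infDist_add_dist (x := c) (y := c') (s := s),
      dist_dyCenter_le (mem_dyCube_dyIndex (q.1 + 1) c)]
  rw [zpow_add_one₀ two_ne_zero] at hparent hcc'
  nlinarith [zpow_pos (two_pos (α := ℝ)) q.1]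

lemma memF_of_le_mul_infDist {Ω : Set (Fin n → ℝ)} {β θ l : ℝ} {c : Fin n → ℝ}
    (hθ : θ < β) (hl : 0 < l) (hlc : l ≤ θ * infDist c Ωᶜ) : MemF Ω β c l := by
  have hc : 0 < infDist c Ωᶜ := infDist_nonneg.lt_of_ne fun h => by
    rw [← h, mul_zero] at hlc; linarith
  exact ⟨not_not.1 fun hcΩ => hc.ne' (infDist_zero_of_mem hcΩ), hl, hlc.trans_lt (by gcongr)⟩

end Whitney

section Counting

variable {n : ℕ}

theorem ncard_le_of_pairwiseDisjoint_dyCube {S : Set (ℤ × (Fin n → ℤ))}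
    (hS : S.PairwiseDisjoint fun q => dyCube q.1 q.2) {x : Fin n → ℝ} {r R : ℝ} (hr : 0 < r)
    (hR : 0 ≤ R) (hlarge : ∀ q ∈ S, r ≤ 2 ^ q.1)
    (hsub : ∀ q ∈ S, dyCube q.1 q.2 ⊆ closedBall x R) :
    S.Finite ∧ S.ncard ≤ ⌈(R / r) ^ n⌉₊ := by
  have hvol := encard_mul_le_measure_of_pairwiseDisjoint volume hS
    (fun q _ => measurableSet_dyCube q.1 q.2) hsub (m := ENNReal.ofReal ((2 * r) ^ n))
    fun q hq => by rw [volume_dyCube]; gcongr; exact hlarge q hq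
  rw [Real.volume_pi_closedBall x hR, Fintype.card_fin] at hvol
  have hpos : 0 < ENNReal.ofReal ((2 * r) ^ n) := ENNReal.ofReal_pos.2 (by positivity)
  rw [← Set.encard_le_coe_iff_finite_ncard_le, ← ENat.toENNReal_le]
  calc (S.encard : ℝ≥0∞) ≤ ENNReal.ofReal ((2 * R) ^ n) / ENNReal.ofReal ((2 * r) ^ n) :=
        (ENNReal.le_div_iff_mul_le (Or.inl hpos.ne') (Or.inl ENNReal.ofReal_ne_top)).2 hvol
    _ = ENNReal.ofReal ((R / r) ^ n) := by
        rw [← ENNReal.ofReal_div_of_pos (by positivity), ← div_pow,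
          mul_div_mul_left _ _ two_ne_zero]
    _ ≤ ENNReal.ofReal ⌈(R / r) ^ n⌉₊ := ENNReal.ofReal_le_ofReal (Nat.le_ceil _)
    _ = ((⌈(R / r) ^ n⌉₊ : ℕ∞) : ℝ≥0∞) := by simp

lemma dist_le_and_le_infDist_of_mem_cloud {Ω : Set (Fin n → ℝ)} {β l : ℝ} {x y : Fin n → ℝ}
    (hβ1 : β < 1) (hQ : MemF Ω β x l) (hy : y ∈ cloud Ω β x l) :
    (1 - β) * dist y x ≤ 4 * infDist x Ωᶜ ∧ (1 - β) ^ 2 * infDist x Ωᶜ ≤ 2 * infDist y Ωᶜ := by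
  obtain ⟨-, hl0, hlx⟩ := hQ
  simp only [cloud, mem_iUnion] at hy
  obtain ⟨c, r, ⟨-, -, hrc⟩, ⟨p, hpc, hpx⟩, hyc⟩ := hy
  rw [Cube, mem_closedBall] at hpc hpx hyc
  have hβ0 : 0 < β := by nlinarith [infDist_nonneg (x := x) (s := Ωᶜ)]
  obtain ⟨hpx₁, hpx₂⟩ := infDist_mem_Ioo_of_dist_le hlx hpx
  obtain ⟨hpc₁, hpc₂⟩ := infDist_mem_Ioo_of_dist_le hrc hpc
  obtain ⟨hyc₁, -⟩ := infDist_mem_Ioo_of_dist_le hrc hyc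
  have hyx : dist y x ≤ 2 * r + l := by
    linarith [dist_triangle4 y c p x, dist_comm c p]
  have hcx : (1 - β) * infDist c Ωᶜ < (1 + β) * infDist x Ωᶜ := by linarith
  have hD := infDist_nonneg (x := x) (s := Ωᶜ)
  constructor
  · calc (1 - β) * dist y x ≤ (1 - β) * (2 * (β * infDist c Ωᶜ) + β * infDist x Ωᶜ) := by
          gcongr; linarith
      _ = 2 * β * ((1 - β) * infDist c Ωᶜ) + β * (1 - β) * infDist x Ωᶜ := by ring
      _ ≤ 2 * β * ((1 + β) * infDist x Ωᶜ) + β * (1 - β) * infDist x Ωᶜ := by gcongr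
      _ ≤ 4 * infDist x Ωᶜ := by nlinarith
  · nlinarith [infDist_nonneg (x := y) (s := Ωᶜ), infDist_nonneg (x := c) (s := Ωᶜ)]

lemma infDist_bounds_of_mem_dyCube {s : Set (Fin n → ℝ)} {a : ℝ} {k : ℤ} {z : Fin n → ℤ}
    {y : Fin n → ℝ} (ha0 : 0 ≤ a) (hlow : a * infDist (dyCenter k z) s ≤ 2 ^ k)
    (hup : 2 * 2 ^ k ≤ infDist (dyCenter k z) s) (hy : y ∈ dyCube k z) :
    a * infDist y s ≤ 2 * 2 ^ k ∧ 2 ^ k ≤ infDist y s := by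
  obtain ⟨h₁, h₂⟩ := abs_le.1 ((abs_infDist_sub_infDist_le s y _).trans (dist_dyCenter_le hy))
  constructor <;> nlinarith [mul_le_mul_of_nonneg_left h₂ ha0]

theorem exists_ncard_meets_cloud_le {Ω : Set (Fin n → ℝ)} {β a : ℝ} (hβ1 : β < 1)
    (ha0 : 0 < a) {W : Set (ℤ × (Fin n → ℤ))} (hW : W.PairwiseDisjoint fun q => dyCube q.1 q.2)
    (hsize : ∀ q ∈ W, a * infDist (dyCenter q.1 q.2) Ωᶜ ≤ 2 ^ q.1 ∧
      2 * 2 ^ q.1 ≤ infDist (dyCenter q.1 q.2) Ωᶜ) :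
    ∃ M : ℕ, ∀ x l, MemF Ω β x l →
      {q ∈ W | (dyCube q.1 q.2 ∩ cloud Ω β x l).Nonempty}.Finite ∧
      {q ∈ W | (dyCube q.1 q.2 ∩ cloud Ω β x l).Nonempty}.ncard ≤ M := by
  refine ⟨⌈(56 / (a * (1 - β) ^ 3)) ^ n⌉₊, fun x l hQ => ?_⟩
  set D := infDist x Ωᶜ
  have h1β : 0 < 1 - β := by linarith
  have hβD : 0 < β * D := hQ.2.1.trans hQ.2.2
  have hβ0 : 0 < β := pos_of_mul_pos_left hβD infDist_nonneg
  have hD : 0 < D := pos_of_mul_pos_right hβD hβ0.le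
  have hratio : 14 * D / (1 - β) / (a * (1 - β) ^ 2 * D / 4) = 56 / (a * (1 - β) ^ 3) := by
    field_simp; ring
  rw [← hratio]
  apply ncard_le_of_pairwiseDisjoint_dyCube (hW.subset (sep_subset _ _)) (x := x) (by positivity)
    (by positivity)
  · rintro q ⟨hqW, y, hyq, hy⟩
    have hyD : (1 - β) ^ 2 * D ≤ 2 * infDist y Ωᶜ :=
      (dist_le_and_le_infDist_of_mem_cloud hβ1 hQ hy).2
    have hky := (infDist_bounds_of_mem_dyCube ha0.le (hsize q hqW).1 (hsize q hqW).2 hyq).1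
    nlinarith
  · rintro q ⟨hqW, y, hyq, hy⟩ w hw
    have hyx : (1 - β) * dist y x ≤ 4 * D := (dist_le_and_le_infDist_of_mem_cloud hβ1 hQ hy).1
    have hky := (infDist_bounds_of_mem_dyCube ha0.le (hsize q hqW).1 (hsize q hqW).2 hyq).2
    have hyD : infDist y Ωᶜ ≤ D + dist y x := infDist_le_infDist_add_dist
    have hwx : dist w x ≤ 2 * D + 3 * dist y x := by
      linarith [dist_triangle w y x, dist_le_of_mem_dyCube hw hyq]
    rw [mem_closedBall, le_div_iff₀ h1β]
    nlinarith [mul_le_mul_of_nonneg_left hwx h1β.le]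

end Counting

theorem exists_dyadic_covering_Wt_general {n : ℕ} (Ω : Set (Fin n → ℝ))
    (hΩo : IsOpen Ω) (hΩpr : Ω ≠ Set.univ)
    (β : ℝ) (hβ1 : β < 1)
    (t : ℕ) (ht : (2:ℝ) ^ (-(t:ℤ)) ≤ β / 5) :
    ∃ W : Set (ℤ × (Fin n → ℤ)), IsWt Ω β t W := by
  set ε : ℝ := 2 ^ (-(t:ℤ) - 3)
  have hε0 : 0 < ε := by positivity
  have h8 : (2:ℝ) ^ (-(t:ℤ)) = 8 * ε := by
    rw [show -(t:ℤ) = -(t:ℤ) - 3 + 3 by ring, zpow_add₀ two_ne_zero]; norm_num; ring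
  have h4 : (2:ℝ) ^ (-(t:ℤ) - 1) = 4 * ε := by
    rw [show -(t:ℤ) - 1 = -(t:ℤ) - 3 + 2 by ring, zpow_add₀ two_ne_zero]; norm_num; ring
  have hΩ : Ω ⊆ {x | 0 < infDist x Ωᶜ} := fun x hx =>
    (hΩo.isClosed_compl.notMem_iff_infDist_pos (nonempty_compl.2 hΩpr)).1 (not_not.2 hx)
  obtain ⟨W, hcov, hdisj, hsize⟩ := exists_whitney_dyadic_cover Ωᶜ hε0 (by linarith)
  refine ⟨W, hΩ.trans hcov, hdisj, fun q hq => ?_, ?_⟩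
  · obtain ⟨hlow, hup⟩ := hsize q hq
    have h2k : (0 : ℝ) < 2 ^ q.1 := by positivity
    refine ⟨memF_of_le_mul_infDist (by linarith) h2k hup,
      memF_of_le_mul_infDist (θ := 30 * ε) (by linarith) (by positivity) (by linarith), hlow, ?_⟩
    rw [h4]
    nlinarith [infDist_nonneg (x := dyCenter q.1 q.2) (s := Ωᶜ)]
  · obtain ⟨M, hM⟩ := exists_ncard_meets_cloud_le hβ1 hε0 hdisj fun q hq =>
      ⟨(hsize q hq).1, by nlinarith [hsize q hq, infDist_nonneg (x := dyCenter q.1 q.2) (s := Ωᶜ)]⟩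
    exact ⟨M, fun x l hQ _ => hM x l hQ⟩

/-- Lemma 2.3, covering lemma: for each `t ∈ ℕ` with
`2^{-t} ≤ β/5` there is a covering `W_t` of `Ω` by pairwise disjoint dyadic
cubes `R ∈ F_β` with `10R ∈ F_β`,
`2^{-t-3} d(x_R,Ω^c) ≤ l_R ≤ 2^{-t-1} d(x_R,Ω^c)`, and such that for some `M`
(depending only on `β`, `t` and `n`) at most `M` cubes of `W_t` meet the cloud
of any `Q₀ ∈ F_β` with `10Q₀ ∉ F_β`. -/
theorem exists_dyadic_covering_Wt {n : ℕ} (Ω : Set (Fin n → ℝ))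
    (hΩo : IsOpen Ω) (hΩne : Ω.Nonempty) (hΩpr : Ω ≠ Set.univ)
    (β : ℝ) (hβ0 : 0 < β) (hβ1 : β < 1)
    (t : ℕ) (ht : (2:ℝ) ^ (-(t:ℤ)) ≤ β / 5) :
    ∃ W : Set (ℤ × (Fin n → ℤ)), IsWt Ω β t W :=
  exists_dyadic_covering_Wt_general Ω hΩo hΩpr β hβ1 t ht
end
end

section
/- Let Ω be a proper open subset of ℝ^n, 0 < β < 1, and let μ be a measure doubling on F_β (i.e., μ(2Q) ≤ c·μ(Q) whenever Q, 2Q ∈ F_β). Let t ∈ ℕ with 2^{-t} ≤ β/20 and let W_t be the dyadic covering of Ω from the covering lemma. Then there exists a constant K, depending only on β and the doubling constant of μ, such that for every cube Q ∈ F_β with 10Q ∉ F_β one has μ(W_{t,Q}) ≤ K·μ(Q), where W_{t,Q} is the union of the cubes R ∈ W_t with R ∩ N_β(Q) ≠ ∅. -/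
open MeasureTheory Metric Set
open scoped ENNReal

noncomputable section

/-!
A cube `R ∈ W_t` meeting the cloud of `Q = Q(x,l)` meets a cube `S ∈ F_β` that meets `Q`.
Since `10Q ∉ F_β`, the distance `D` from the centre of `S` to `Ωᶜ` is comparable to `l`, and by
the Whitney condition on `R` so is `l_R`, with constants depending on `β` and `t` only. Hence `μ(R)`
is controlled by `μ(Q)` through a bounded number of doublings: for `p ∈ R ∩ S` and `q ∈ S ∩ Q`,
`R ⊆ Q(p, 2^J v)`, which costs `J` doublings over `Q(p,v)`, and `Q(p,v)` is moved to `Q(q,v)` and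
then to `Q(x,v) ⊆ Q` by steps of length `v` along segments inside the convex cubes `S` and `Q`, one
doubling per step. Summing over the at most `M` cubes of `W_t` meeting the cloud gives the bound.
-/

def IsDoublingOn {n : ℕ} (Ω : Set (Fin n → ℝ)) (β : ℝ) (μ : Measure (Fin n → ℝ))
    (c : ℝ≥0∞) : Prop :=
  ∀ x l, MemF Ω β x l → MemF Ω β x (2 * l) → μ (Cube x (2 * l)) ≤ c * μ (Cube x l)

lemma measure_biUnion_le_ncard_mul {ι α : Type*} [MeasurableSpace α] {μ : Measure α}
    {I : Set ι} (hI : I.Finite) {s : ι → Set α} {B : ℝ≥0∞} (h : ∀ i ∈ I, μ (s i) ≤ B) :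
    μ (⋃ i ∈ I, s i) ≤ I.ncard * B := by
  rw [← hI.coe_toFinset, Set.ncard_coe_finset, ← nsmul_eq_mul]
  simp only [Finset.mem_coe]
  exact (measure_biUnion_finset_le _ _).trans
    (Finset.sum_le_card_nsmul _ _ _ fun i hi => h i (hI.mem_toFinset.1 hi))

/-- `D` is the distance to `Ωᶜ` of the centre of the cube `S ∈ F_β` through which `R = Q(x_R, l_R)`
meets the cloud of `Q = Q(x,l)`, and `v` is the step length of the chains in
`measure_whitney_cube_le`: the first two bounds put `Q(y, 2v)` in `F_β` for `y ∈ S ∪ Q`, the third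
lets `m` steps of length `v` cross `S` and `Q`. -/
lemma step_length_bounds {β τ A D l lR v : ℝ} {m : ℕ} (hβ0 : 0 < β) (hβ1 : β < 1)
    (hA : 0 < A) (hA3 : 3 ≤ A * (1 - β) ^ 2) (hm : 18 * β * A ≤ m * τ * (1 - β) ^ 2)
    (hD : 0 ≤ D) (hDl : β * D * (1 - β) ≤ 11 * l) (hlRD : 19 * lR ≤ β * D)
    (hDlR : τ * (1 - β) * D ≤ 9 * lR) (hv : 0 < v) (hAv : A * v = 2 * lR) :
    8 * v ≤ β * (1 - β) * D ∧ 2 * v ≤ (1 - β) * l ∧ 4 * β * D ≤ m * v * (1 - β) := by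
  have hβ' : 0 < 1 - β := by linarith
  refine ⟨?_, ?_, ?_⟩
  · have hA1 : 3 ≤ A * (1 - β) := by linarith [mul_nonneg (mul_pos hA hβ').le hβ0.le]
    refine le_of_mul_le_mul_right ?_ hA
    linarith [mul_le_mul_of_nonneg_left hA1 (mul_nonneg hβ0.le hD), mul_nonneg hβ0.le hD]
  · have e : A * (1 - β) ^ 2 * v = 2 * lR * (1 - β) ^ 2 := by rw [← hAv]; ring
    linarith [mul_le_mul_of_nonneg_right hA3 hv.le,
      mul_le_mul_of_nonneg_right hlRD (sq_nonneg (1 - β)), mul_le_mul_of_nonneg_right hDl hβ'.le]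
  · refine le_of_mul_le_mul_right ?_ hA
    have e : m * v * (1 - β) * A = 2 * lR * (m * (1 - β)) := by rw [← hAv]; ring
    linarith [mul_le_mul_of_nonneg_left hDlR (mul_nonneg m.cast_nonneg hβ'.le),
      mul_le_mul_of_nonneg_right hm hD]

section

variable {n : ℕ} {Ω : Set (Fin n → ℝ)} {β : ℝ}

lemma dyCube_subset_cube (k : ℤ) (z : Fin n → ℤ) :
    dyCube k z ⊆ Cube (dyCenter k z) (2 ^ k) := by
  rw [Cube, closedBall_pi _ (by positivity)]
  refine Set.pi_mono fun i _ => ?_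
  rw [Real.closedBall_eq_Icc, dyCenter, zpow_add_one₀ two_ne_zero]
  exact Ico_subset_Icc_self.trans (Icc_subset_Icc (le_of_eq (by ring)) (le_of_eq (by ring)))

lemma memF_of_le {x : Fin n → ℝ} {l l' : ℝ} (h : MemF Ω β x l) (h0 : 0 < l') (hle : l' ≤ l) :
    MemF Ω β x l' :=
  ⟨h.1, h0, hle.trans_lt h.2.2⟩

lemma memF_of_lt_mul_infDist {y : Fin n → ℝ} {ρ : ℝ} (h0 : 0 < ρ)
    (h : ρ < β * infDist y Ωᶜ) : MemF Ω β y ρ := by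
  refine ⟨?_, h0, h⟩
  by_contra hy
  rw [infDist_zero_of_mem hy, mul_zero] at h
  linarith

lemma infDist_comparable_of_inter_cube (hβ0 : 0 ≤ β) (hβ1 : β ≤ 1) {x xc q : Fin n → ℝ}
    {l r : ℝ} (hQ : MemF Ω β x l) (hQ10 : ¬ MemF Ω β x (10 * l)) (hS : MemF Ω β xc r)
    (hqS : q ∈ Cube xc r) (hqQ : q ∈ Cube x l) :
    l * (1 - β) < 2 * β * infDist xc Ωᶜ ∧ β * infDist xc Ωᶜ * (1 - β) ≤ 11 * l := by
  rw [Cube, mem_closedBall] at hqS hqQ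
  have h10 : β * infDist x Ωᶜ ≤ 10 * l := by
    by_contra h
    exact hQ10 ⟨hQ.1, by linarith [hQ.2.1], not_le.1 h⟩
  have hxc : infDist x Ωᶜ ≤ infDist xc Ωᶜ + r + l := by
    linarith [infDist_le_infDist_add_dist (x := x) (y := xc) (s := Ωᶜ),
      dist_triangle_left x xc q]
  have hcx : infDist xc Ωᶜ ≤ infDist x Ωᶜ + l + r := by
    linarith [infDist_le_infDist_add_dist (x := xc) (y := x) (s := Ωᶜ),
      dist_triangle_left xc x q]
  have hβr : β * r ≤ β * (β * infDist xc Ωᶜ) := mul_le_mul_of_nonneg_left hS.2.2.le hβ0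
  constructor
  · linarith [mul_le_mul_of_nonneg_left hxc hβ0, hQ.2.2, hS.2.2,
      mul_le_of_le_one_left hS.2.1.le hβ1]
  · linarith [mul_le_mul_of_nonneg_left hcx hβ0, mul_le_of_le_one_left hQ.2.1.le hβ1]

lemma whitney_radius_comparable (hβ0 : 0 ≤ β) (hβ1 : β ≤ 1) {τ : ℝ} (hτ0 : 0 ≤ τ)
    (hτβ : τ ≤ β / 20) {xR xc p : Fin n → ℝ} {lR r : ℝ} (hlR : 0 < lR)
    (hlow : τ / 8 * infDist xR Ωᶜ ≤ lR) (hhigh : lR ≤ τ / 2 * infDist xR Ωᶜ)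
    (hS : r < β * infDist xc Ωᶜ) (hpR : p ∈ Cube xR lR) (hpS : p ∈ Cube xc r) :
    2 * lR < β * infDist p Ωᶜ ∧ 19 * lR ≤ β * infDist xc Ωᶜ ∧
      τ * (1 - β) * infDist xc Ωᶜ ≤ 9 * lR := by
  rw [Cube, mem_closedBall] at hpR hpS
  have hRp : infDist xR Ωᶜ ≤ infDist p Ωᶜ + lR := by
    linarith [infDist_le_infDist_add_dist (x := xR) (y := p) (s := Ωᶜ), dist_comm p xR]
  have hpR' : infDist p Ωᶜ ≤ infDist xR Ωᶜ + lR := by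
    linarith [infDist_le_infDist_add_dist (x := p) (y := xR) (s := Ωᶜ)]
  have hpc : infDist p Ωᶜ ≤ infDist xc Ωᶜ + r := by
    linarith [infDist_le_infDist_add_dist (x := p) (y := xc) (s := Ωᶜ)]
  have hcp : infDist xc Ωᶜ ≤ infDist p Ωᶜ + r := by
    linarith [infDist_le_infDist_add_dist (x := xc) (y := p) (s := Ωᶜ), dist_comm p xc]
  have h40 : 40 * lR ≤ β * infDist xR Ωᶜ := by
    linarith [mul_le_mul_of_nonneg_right hτβ (infDist_nonneg : 0 ≤ infDist xR Ωᶜ)]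
  have h39 : 39 * lR ≤ β * infDist p Ωᶜ := by
    linarith [mul_le_mul_of_nonneg_left hRp hβ0, mul_le_of_le_one_left hlR.le hβ1]
  refine ⟨by linarith, ?_, ?_⟩
  · linarith [mul_le_mul_of_nonneg_left hpc hβ0, mul_le_mul_of_nonneg_left hS.le hβ0,
      mul_le_of_le_one_left (mul_nonneg hβ0 (infDist_nonneg (x := xc) (s := Ωᶜ))) hβ1]
  · have hτ1 : τ ≤ 1 := by linarith
    linarith [mul_le_mul_of_nonneg_left hcp hτ0, mul_le_mul_of_nonneg_left hS.le hτ0,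
      mul_le_mul_of_nonneg_left hpR' hτ0, mul_le_of_le_one_left hlR.le hτ1]

variable {μ : Measure (Fin n → ℝ)} {c : ℝ≥0∞}

namespace IsDoublingOn

lemma measure_cube_le (hdb : IsDoublingOn Ω β μ c) {a b : Fin n → ℝ} {v : ℝ} (hv : 0 < v)
    (hab : dist a b ≤ v) (hb : MemF Ω β b (2 * v)) : μ (Cube a v) ≤ c * μ (Cube b v) :=
  (measure_mono (closedBall_subset_closedBall' (by linarith))).trans
    (hdb b v (memF_of_le hb hv (by linarith)) hb)

lemma measure_cube_two_pow_mul_le (hdb : IsDoublingOn Ω β μ c) {p : Fin n → ℝ} {v : ℝ}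
    (hv : 0 < v) (j : ℕ) (hj : MemF Ω β p (2 ^ j * v)) :
    μ (Cube p (2 ^ j * v)) ≤ c ^ j * μ (Cube p v) := by
  induction j with
  | zero => simp
  | succ j ih =>
    rw [pow_succ', mul_assoc] at hj ⊢
    have hj' : MemF Ω β p (2 ^ j * v) := memF_of_le hj (by positivity) (by linarith [hj.2.1])
    calc μ (Cube p (2 * (2 ^ j * v))) ≤ c * μ (Cube p (2 ^ j * v)) := hdb p _ hj' hj
      _ ≤ c * (c ^ j * μ (Cube p v)) := by gcongr; exact ih hj'
      _ = c ^ (j + 1) * μ (Cube p v) := by rw [pow_succ', mul_assoc]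

lemma measure_cube_le_of_segment (hdb : IsDoublingOn Ω β μ c) {v : ℝ} (hv : 0 < v) (m : ℕ)
    {a b : Fin n → ℝ} (hab : dist a b ≤ m * v)
    (hseg : ∀ y ∈ segment ℝ a b, MemF Ω β y (2 * v)) :
    μ (Cube a v) ≤ c ^ m * μ (Cube b v) := by
  induction m generalizing a with
  | zero =>
    rw [dist_le_zero.1 (by simpa using hab : dist a b ≤ 0), pow_zero, one_mul]
  | succ m ih =>
    set a' := AffineMap.lineMap a b ((m + 1 : ℝ)⁻¹)
    have hm : (0 : ℝ) < m + 1 := by positivity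
    have ha' : a' ∈ segment ℝ a b :=
      lineMap_mem_segment ℝ a b ⟨by positivity, inv_le_one_of_one_le₀ (by linarith)⟩
    have haa' : dist a a' ≤ v := by
      rw [dist_comm, dist_lineMap_left, Real.norm_of_nonneg (by positivity), inv_mul_le_iff₀ hm]
      push_cast at hab
      linarith
    have ha'b : dist a' b ≤ m * v := by
      have h1 : 1 - ((m : ℝ) + 1)⁻¹ = m / (m + 1) := by field_simp; ring
      rw [dist_lineMap_right, h1, Real.norm_of_nonneg (by positivity), div_mul_eq_mul_div,
        div_le_iff₀ hm]
      push_cast at hab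
      linarith [mul_le_mul_of_nonneg_left hab m.cast_nonneg]
    calc μ (Cube a v) ≤ c * μ (Cube a' v) := hdb.measure_cube_le hv haa' (hseg a' ha')
      _ ≤ c * (c ^ m * μ (Cube b v)) := by
          gcongr
          exact ih ha'b fun y hy =>
            hseg y ((convex_segment a b).segment_subset ha' (right_mem_segment ℝ a b) hy)
      _ = c ^ (m + 1) * μ (Cube b v) := by rw [pow_succ', mul_assoc]

lemma measure_cube_le_of_mem_cube (hdb : IsDoublingOn Ω β μ c) (hβ : 0 ≤ β) {v : ℝ}
    (hv : 0 < v) {z : Fin n → ℝ} {ρ : ℝ} (hzρ : 2 * v < β * (infDist z Ωᶜ - ρ)) (m : ℕ)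
    (hm : 2 * ρ ≤ m * v) {a b : Fin n → ℝ} (ha : a ∈ Cube z ρ) (hb : b ∈ Cube z ρ) :
    μ (Cube a v) ≤ c ^ m * μ (Cube b v) := by
  refine hdb.measure_cube_le_of_segment hv m ?_ fun y hy => ?_
  · rw [Cube, mem_closedBall] at ha hb
    linarith [dist_triangle_right a b z]
  · have hy : dist y z ≤ ρ := (convex_closedBall z ρ).segment_subset ha hb hy
    refine memF_of_lt_mul_infDist (by linarith) (hzρ.trans_le ?_)
    gcongr
    linarith [infDist_le_infDist_add_dist (x := z) (y := y) (s := Ωᶜ), dist_comm y z]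

lemma measure_whitney_cube_le (hdb : IsDoublingOn Ω β μ c) (hβ0 : 0 < β)
    (hβ1 : β < 1) {τ : ℝ} (hτ0 : 0 ≤ τ) (hτβ : τ ≤ β / 20) {J m : ℕ}
    (hJ : 3 ≤ 2 ^ J * (1 - β) ^ 2) (hm : 18 * β * 2 ^ J ≤ m * τ * (1 - β) ^ 2)
    {x xR : Fin n → ℝ} {l lR : ℝ} (hQ : MemF Ω β x l) (hQ10 : ¬ MemF Ω β x (10 * l))
    (hlR : 0 < lR) (hlow : τ / 8 * infDist xR Ωᶜ ≤ lR) (hhigh : lR ≤ τ / 2 * infDist xR Ωᶜ)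
    (hmeet : (Cube xR lR ∩ cloud Ω β x l).Nonempty) :
    μ (Cube xR lR) ≤ c ^ (J + 2 * m) * μ (Cube x l) := by
  obtain ⟨p, hpR, hpC⟩ := hmeet
  simp only [cloud, mem_iUnion] at hpC
  obtain ⟨xc, r, hS, ⟨q, hqS, hqQ⟩, hpS⟩ := hpC
  obtain ⟨hlD, hDl⟩ := infDist_comparable_of_inter_cube hβ0.le hβ1.le hQ hQ10 hS hqS hqQ
  obtain ⟨hp, hlRD, hDlR⟩ :=
    whitney_radius_comparable hβ0.le hβ1.le hτ0 hτβ hlR hlow hhigh hS.2.2 hpR hpS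
  set D := infDist xc Ωᶜ
  set v := 2 * lR / 2 ^ J
  have hv : 0 < v := by positivity
  have hAv : 2 ^ J * v = 2 * lR := by simp only [v]; field_simp
  have hD : 0 ≤ D := infDist_nonneg
  obtain ⟨hvS, hvQ, hmv⟩ :=
    step_length_bounds hβ0 hβ1 (by positivity) hJ hm hD hDl hlRD hDlR hv hAv
  have hβ' : 0 < 1 - β := by linarith
  have hmv0 : 0 ≤ m * v := by positivity
  have hSv : 2 * v < β * (D - r) := by linarith [mul_lt_mul_of_pos_left hS.2.2 hβ0]
  have hQv : 2 * v < β * (infDist x Ωᶜ - l) := by linarith [hQ.2.2]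
  have hSm : 2 * r ≤ m * v := by linarith [hS.2.2, mul_nonneg hmv0 hβ0.le, mul_nonneg hβ0.le hD]
  have hQm : 2 * l ≤ m * v := le_of_mul_le_mul_right (by linarith) hβ'
  calc μ (Cube xR lR) ≤ μ (Cube p (2 ^ J * v)) :=
        measure_mono (closedBall_subset_closedBall'
          (by rw [hAv, dist_comm]; linarith [mem_closedBall.1 hpR]))
    _ ≤ c ^ J * μ (Cube p v) :=
        hdb.measure_cube_two_pow_mul_le hv J
          (memF_of_lt_mul_infDist (by positivity) (by rwa [hAv]))
    _ ≤ c ^ J * (c ^ m * μ (Cube q v)) := by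
        gcongr; exact hdb.measure_cube_le_of_mem_cube hβ0.le hv hSv m hSm hpS hqS
    _ ≤ c ^ J * (c ^ m * (c ^ m * μ (Cube x v))) := by
        gcongr
        exact hdb.measure_cube_le_of_mem_cube hβ0.le hv hQv m hQm hqQ
          (mem_closedBall_self hQ.2.1.le)
    _ ≤ c ^ J * (c ^ m * (c ^ m * μ (Cube x l))) := by
        gcongr; exact closedBall_subset_closedBall (by linarith [mul_nonneg hβ0.le hQ.2.1.le])
    _ = c ^ (J + 2 * m) * μ (Cube x l) := by ring

lemma exists_measure_whitney_cube_le (hdb : IsDoublingOn Ω β μ c) (hβ0 : 0 < β)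
    (hβ1 : β < 1) {τ : ℝ} (hτ0 : 0 < τ) (hτβ : τ ≤ β / 20) :
    ∃ N : ℕ, ∀ x xR l lR, MemF Ω β x l → ¬ MemF Ω β x (10 * l) → 0 < lR →
      τ / 8 * infDist xR Ωᶜ ≤ lR → lR ≤ τ / 2 * infDist xR Ωᶜ →
      (Cube xR lR ∩ cloud Ω β x l).Nonempty → μ (Cube xR lR) ≤ c ^ N * μ (Cube x l) := by
  have hβ' : 0 < (1 - β) ^ 2 := pow_pos (by linarith) 2
  obtain ⟨J, hJ⟩ := pow_unbounded_of_one_lt (3 / (1 - β) ^ 2) one_lt_two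
  obtain ⟨m, hm⟩ := exists_nat_ge (18 * β * 2 ^ J / (τ * (1 - β) ^ 2))
  rw [div_lt_iff₀ hβ'] at hJ
  rw [div_le_iff₀ (by positivity), ← mul_assoc] at hm
  exact ⟨J + 2 * m, fun x xR l lR hQ hQ10 hlR hlow hhigh hmeet =>
    hdb.measure_whitney_cube_le hβ0 hβ1 hτ0.le hτβ hJ.le hm hQ hQ10 hlR hlow hhigh hmeet⟩

end IsDoublingOn

end

theorem measure_WtQ_le_general {n : ℕ} (Ω : Set (Fin n → ℝ))
    (β : ℝ) (hβ0 : 0 < β) (hβ1 : β < 1)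
    (μ : Measure (Fin n → ℝ)) (c : ℝ≥0∞) (hc : c ≠ ⊤)
    (hdb : ∀ x l, MemF Ω β x l → MemF Ω β x (2 * l) →
      μ (Cube x (2 * l)) ≤ c * μ (Cube x l))
    (t : ℕ) (ht : (2:ℝ) ^ (-(t:ℤ)) ≤ β / 20)
    (W : Set (ℤ × (Fin n → ℤ))) (hW : IsWt Ω β t W) :
    ∃ K : ℝ≥0∞, K ≠ ⊤ ∧ ∀ x l, MemF Ω β x l → ¬ MemF Ω β x (10 * l) →
      μ (WtQ Ω β W x l) ≤ K * μ (Cube x l) := by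
  obtain ⟨-, -, hWF, M, hM⟩ := hW
  obtain ⟨N, hN⟩ :=
    IsDoublingOn.exists_measure_whitney_cube_le hdb hβ0 hβ1 (by positivity) ht
  refine ⟨M * c ^ N, by finiteness, fun x l hQ hQ10 => ?_⟩
  obtain ⟨hfin, hcard⟩ := hM x l hQ hQ10
  have hR : ∀ R ∈ {R ∈ W | (dyCube R.1 R.2 ∩ cloud Ω β x l).Nonempty},
      μ (dyCube R.1 R.2) ≤ c ^ N * μ (Cube x l) := by
    rintro R ⟨hRW, hmeet⟩
    obtain ⟨-, -, hlow, hhigh⟩ := hWF R hRW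
    have h8 : (2:ℝ) ^ (-(t:ℤ) - 3) = 2 ^ (-(t:ℤ)) / 8 := by rw [zpow_sub₀ two_ne_zero]; norm_num
    have h2 : (2:ℝ) ^ (-(t:ℤ) - 1) = 2 ^ (-(t:ℤ)) / 2 := by rw [zpow_sub₀ two_ne_zero]; norm_num
    rw [h8] at hlow
    rw [h2] at hhigh
    exact (measure_mono (dyCube_subset_cube R.1 R.2)).trans
      (hN _ _ _ _ hQ hQ10 (by positivity) hlow hhigh
        (hmeet.mono (inter_subset_inter_left _ (dyCube_subset_cube R.1 R.2))))
  calc μ (WtQ Ω β W x l)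
      ≤ _ := measure_biUnion_le_ncard_mul (s := fun R => dyCube R.1 R.2) hfin hR
    _ ≤ M * c ^ N * μ (Cube x l) := by rw [mul_assoc]; gcongr

/-- Lemma 2.4: if `μ` is doubling on `F_β` with doubling
constant `c`, `2^{-t} ≤ β/20` and `W_t` is a covering as in the covering
lemma, then there is `K`, depending only on `β` and `c`, such that
`μ(W_{t,Q}) ≤ K μ(Q)` for every `Q ∈ F_β` with `10Q ∉ F_β`. -/
theorem measure_WtQ_le {n : ℕ} (Ω : Set (Fin n → ℝ))
    (hΩo : IsOpen Ω) (hΩne : Ω.Nonempty) (hΩpr : Ω ≠ Set.univ)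
    (β : ℝ) (hβ0 : 0 < β) (hβ1 : β < 1)
    (μ : Measure (Fin n → ℝ)) (c : ℝ≥0∞) (hc : c ≠ ⊤)
    (hdb : ∀ x l, MemF Ω β x l → MemF Ω β x (2 * l) →
      μ (Cube x (2 * l)) ≤ c * μ (Cube x l))
    (t : ℕ) (ht : (2:ℝ) ^ (-(t:ℤ)) ≤ β / 20)
    (W : Set (ℤ × (Fin n → ℤ))) (hW : IsWt Ω β t W) :
    ∃ K : ℝ≥0∞, K ≠ ⊤ ∧ ∀ x l, MemF Ω β x l → ¬ MemF Ω β x (10 * l) →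
      μ (WtQ Ω β W x l) ≤ K * μ (Cube x l) :=
  measure_WtQ_le_general Ω β hβ0 hβ1 μ c hc hdb t ht W hW
end
end

section
/- Let 0 < β < 1 and 0 < c₁ < c₂ < 1, and let {Q_i} be a pairwise disjoint collection of cubes Q_i = Q(x_i, l_i) ∈ F_β of Whitney type, i.e., c₁ < l_i / d_∞(x_i, Ω^c) < c₂ for all i. Then the clouds N_β(Q_i) have bounded overlap: there exists a natural number M > 0, depending only on β, c₁, c₂ (and n), such that Σ_i χ_{N_β(Q_i)}(x) ≤ M for every x ∈ Ω. -/
open MeasureTheory Metric Set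
open scoped ENNReal

noncomputable section

/-! If `x` lies in the cloud of `Q_i`, some cube `R ∈ F_β` contains `x` and a point `y ∈ Q_i`.
Along the chain `x, c_R, y, x_i` the distance to `Ωᶜ` changes at each step by a factor controlled
by `β` or `c₂`, so `d(x)` and `d(x_i)` agree up to the factor `κ = (1 + β) / ((1 - β)(1 - c₂))`.
Hence `l_i > c₁ d(x) / κ`, while `Q_i` lies in the ball of radius `4 κ d(x)` about `x`. The `Q_i`
being disjoint, comparing volumes bounds their number by `(4 κ² / c₁)ⁿ`. -/

lemma encard_mul_le_measure_of_pairwiseDisjoint_s8 {α ι : Type*} [MeasurableSpace α]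
    (μ : Measure α) {f : ι → Set α} {S : Set ι} {ε : ℝ≥0∞} {U : Set α}
    (hm : ∀ i ∈ S, MeasurableSet (f i)) (hd : S.PairwiseDisjoint f)
    (hε : ∀ i ∈ S, ε ≤ μ (f i)) (hU : ∀ i ∈ S, f i ⊆ U) :
    S.encard * ε ≤ μ U :=
  calc S.encard * ε = ∑' _ : S, ε := (ENNReal.tsum_set_const S ε).symm
    _ ≤ ∑' i : S, μ (f i) := ENNReal.tsum_le_tsum fun i => hε i i.2
    _ ≤ μ (⋃ i : S, f i) :=
        tsum_meas_le_meas_iUnion_of_disjoint μ (fun i => hm i i.2)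
          fun i j hij => hd i.2 j.2 (Subtype.coe_ne_coe.mpr hij)
    _ ≤ μ U := measure_mono (iUnion_subset fun i => hU i i.2)

lemma encard_le_of_pairwiseDisjoint_closedBall {E ι : Type*} [NormedAddCommGroup E]
    [NormedSpace ℝ E] [MeasurableSpace E] [BorelSpace E] [FiniteDimensional ℝ E]
    {z : ι → E} {l : ι → ℝ} {S : Set ι} {x : E} {a R : ℝ} (ha : 0 < a) (hR : 0 ≤ R)
    (hd : S.PairwiseDisjoint fun i => closedBall (z i) (l i)) (hl : ∀ i ∈ S, a ≤ l i)
    (hsub : ∀ i ∈ S, closedBall (z i) (l i) ⊆ closedBall x R) :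
    S.encard ≤ ⌈(R / a) ^ Module.finrank ℝ E⌉₊ := by
  set μ : Measure E := Measure.addHaar
  set d := Module.finrank ℝ E
  set v := ENNReal.ofReal (a ^ d) * μ (closedBall 0 1)
  have hv : v ≠ 0 := mul_ne_zero (ENNReal.ofReal_pos.mpr (by positivity)).ne'
    (measure_closedBall_pos μ 0 one_pos).ne'
  have hv' : v ≠ ⊤ := ENNReal.mul_ne_top ENNReal.ofReal_ne_top measure_closedBall_lt_top.ne
  have hpack : (S.encard : ℝ≥0∞) * v ≤ ENNReal.ofReal ((R / a) ^ d) * v := by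
    refine (encard_mul_le_measure_of_pairwiseDisjoint_s8 μ (fun _ _ => measurableSet_closedBall) hd
      (fun i hi => (Measure.addHaar_closedBall' μ (z i) ha.le).symm.trans_le
        (measure_mono (closedBall_subset_closedBall (hl i hi)))) hsub).trans_eq ?_
    rw [Measure.addHaar_closedBall' μ x hR, ← mul_assoc, ← ENNReal.ofReal_mul (by positivity),
      ← mul_pow, div_mul_cancel₀ R ha.ne']
  rw [← ENat.toENNReal_le, ENat.toENNReal_coe]
  exact ((ENNReal.mul_le_mul_iff_left hv hv').mp hpack).trans
    ((ENNReal.ofReal_le_ofReal (Nat.le_ceil _)).trans_eq (ENNReal.ofReal_natCast _))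

section InfDist

variable {α : Type*} [PseudoMetricSpace α] {s : Set α} {x y z c : α} {r l β γ c₁ c₂ : ℝ}

lemma infDist_bounds_of_mem_closedBall (hy : y ∈ closedBall c r) (hr : r < β * infDist c s) :
    (1 - β) * infDist c s < infDist y s ∧ infDist y s < (1 + β) * infDist c s := by
  have hyc : dist y c ≤ r := hy
  constructor
  · linarith [infDist_le_infDist_add_dist (x := c) (y := y) (s := s), dist_comm c y]
  · linarith [infDist_le_infDist_add_dist (x := y) (y := c) (s := s)]

lemma infDist_comparable_of_closedBall_inter (hβ : 0 < β) (hβ1 : β < 1) (hγ1 : γ < 1)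
    (hx : x ∈ closedBall c r) (hy : y ∈ closedBall c r ∩ closedBall z l)
    (hr : r < β * infDist c s) (hl : l < γ * infDist z s) :
    (1 - β) * (1 - γ) * infDist z s < (1 + β) * infDist x s ∧
      (1 - β) * (1 - γ) * infDist x s < (1 + β) * infDist z s := by
  obtain ⟨hxc₁, hxc₂⟩ := infDist_bounds_of_mem_closedBall hx hr
  obtain ⟨hyc₁, hyc₂⟩ := infDist_bounds_of_mem_closedBall hy.1 hr
  obtain ⟨hyz₁, hyz₂⟩ := infDist_bounds_of_mem_closedBall hy.2 hl
  have hz : 0 ≤ infDist z s := infDist_nonneg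
  refine ⟨by nlinarith, ?_⟩
  have hchain : (1 - β) * infDist x s < (1 + β) * ((1 + γ) * infDist z s) := by
    nlinarith [mul_lt_mul_of_pos_left hxc₂ (sub_pos.mpr hβ1)]
  nlinarith [mul_lt_mul_of_pos_left hchain (sub_pos.mpr hγ1),
    mul_nonneg (mul_nonneg (by linarith : (0:ℝ) ≤ 1 + β) (sq_nonneg γ)) hz]

lemma whitney_bounds_of_closedBall_inter (hβ : 0 < β) (hβ1 : β < 1) (hc₁ : 0 < c₁)
    (hc₂ : c₂ < 1) (hx : x ∈ closedBall c r) (hy : y ∈ closedBall c r ∩ closedBall z l)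
    (hr : r < β * infDist c s) (hl₁ : c₁ * infDist z s < l) (hl₂ : l < c₂ * infDist z s) :
    let κ := (1 + β) / ((1 - β) * (1 - c₂))
    0 < infDist x s ∧ c₁ * infDist x s / κ < l ∧
      closedBall z l ⊆ closedBall x (4 * κ * infDist x s) := by
  intro κ
  have hz : 0 < infDist z s := by
    by_contra! h
    nlinarith [infDist_nonneg (x := z) (s := s)]
  have hc₂0 : 0 < c₂ := by nlinarith
  have hden : 0 < (1 - β) * (1 - c₂) := mul_pos (by linarith) (by linarith)
  have hκ : 0 < κ := div_pos (by linarith) hden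
  obtain ⟨hzx, hxz⟩ := infDist_comparable_of_closedBall_inter hβ hβ1 hc₂ hx hy hr hl₂
  have hx0 : 0 < infDist x s := by nlinarith
  have hzx' : infDist z s < κ * infDist x s := by
    rw [div_mul_eq_mul_div, lt_div_iff₀ hden]; linarith
  have hxz' : infDist x s < κ * infDist z s := by
    rw [div_mul_eq_mul_div, lt_div_iff₀ hden]; linarith
  have hrx : r < κ * infDist x s := by
    have hκ1 : 1 ≤ κ * (1 - β) := by
      rw [div_mul_eq_mul_div, le_div_iff₀ hden]; nlinarith
    have hc : (1 - β) * infDist c s < infDist x s := (infDist_bounds_of_mem_closedBall hx hr).1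
    have hc0 : 0 ≤ infDist c s := infDist_nonneg
    nlinarith [mul_le_mul_of_nonneg_right hκ1 hx0.le]
  refine ⟨hx0, ?_, closedBall_subset_closedBall' ?_⟩
  · rw [div_lt_iff₀ hκ]
    nlinarith [mul_lt_mul_of_pos_left hxz' hc₁]
  · have hx' : dist x c ≤ r := hx
    have hyc : dist y c ≤ r := hy.1
    have hyz : dist y z ≤ l := hy.2
    have := dist_triangle4 z y c x
    rw [dist_comm z y, dist_comm c x] at this
    nlinarith

end InfDist

lemma whitney_bounds_of_mem_cloud {n : ℕ} {Ω : Set (Fin n → ℝ)} {β c₁ c₂ : ℝ} {x z : Fin n → ℝ}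
    {l : ℝ} (hβ : 0 < β) (hβ1 : β < 1) (hc₁ : 0 < c₁) (hc₂ : c₂ < 1)
    (hW : c₁ < l / infDist z Ωᶜ ∧ l / infDist z Ωᶜ < c₂) (hx : x ∈ cloud Ω β z l) :
    let κ := (1 + β) / ((1 - β) * (1 - c₂))
    0 < infDist x Ωᶜ ∧ c₁ * infDist x Ωᶜ / κ < l ∧
      Cube z l ⊆ closedBall x (4 * κ * infDist x Ωᶜ) := by
  have hz : 0 < infDist z Ωᶜ := by
    rcases (infDist_nonneg (x := z) (s := Ωᶜ)).eq_or_lt with h | h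
    · rw [← h, div_zero] at hW; linarith
    · exact h
  rw [lt_div_iff₀ hz, div_lt_iff₀ hz] at hW
  simp only [cloud, mem_iUnion] at hx
  obtain ⟨c, r, ⟨-, -, hr⟩, ⟨y, hy⟩, hxc⟩ := hx
  exact whitney_bounds_of_closedBall_inter hβ hβ1 hc₁ hc₂ hxc hy hr (by linarith) (by linarith)

theorem clouds_bounded_overlap_general {n : ℕ} (Ω : Set (Fin n → ℝ))
    (β c₁ c₂ : ℝ) (hβ0 : 0 < β) (hβ1 : β < 1)
    (hc₁ : 0 < c₁) (hc₂ : c₂ < 1) :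
    ∃ M : ℕ, 0 < M ∧
      ∀ (ι : Type) (xc : ι → (Fin n → ℝ)) (lc : ι → ℝ),
        (∀ i, MemF Ω β (xc i) (lc i)) →
        (Pairwise fun i j => Disjoint (Cube (xc i) (lc i)) (Cube (xc j) (lc j))) →
        (∀ i, c₁ < lc i / Metric.infDist (xc i) Ωᶜ ∧
          lc i / Metric.infDist (xc i) Ωᶜ < c₂) →
        ∀ x ∈ Ω, {i | x ∈ cloud Ω β (xc i) (lc i)}.Finite ∧
          {i | x ∈ cloud Ω β (xc i) (lc i)}.ncard ≤ M := by
  set κ := (1 + β) / ((1 - β) * (1 - c₂))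
  refine ⟨max 1 ⌈(4 * κ * κ / c₁) ^ n⌉₊, lt_max_of_lt_left one_pos, ?_⟩
  intro ι xc lc _ hpw hW x _
  set S := {i | x ∈ cloud Ω β (xc i) (lc i)}
  rcases S.eq_empty_or_nonempty with hS | ⟨i₀, hi₀⟩
  · simp [hS]
  have hbounds := fun i (hi : i ∈ S) => whitney_bounds_of_mem_cloud hβ0 hβ1 hc₁ hc₂ (hW i) hi
  have hx0 := (hbounds i₀ hi₀).1
  rw [← Set.encard_le_coe_iff_finite_ncard_le]
  calc S.encard
      ≤ ⌈(4 * κ * infDist x Ωᶜ / (c₁ * infDist x Ωᶜ / κ)) ^ Module.finrank ℝ (Fin n → ℝ)⌉₊ :=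
        encard_le_of_pairwiseDisjoint_closedBall (by positivity) (by positivity)
          (fun i _ j _ hij => hpw hij) (fun i hi => (hbounds i hi).2.1.le)
          fun i hi => (hbounds i hi).2.2
    _ ≤ max 1 ⌈(4 * κ * κ / c₁) ^ n⌉₊ := by
        rw [Module.finrank_fin_fun,
          show 4 * κ * infDist x Ωᶜ / (c₁ * infDist x Ωᶜ / κ) = 4 * κ * κ / c₁ by field_simp]
        exact_mod_cast le_max_right _ _

/-- Lemma 2.6: clouds of a pairwise disjoint family of
Whitney-type cubes of `F_β` have bounded overlap, the bound `M` depending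
only on `β`, `c₁`, `c₂` (and `n`). -/
theorem clouds_bounded_overlap {n : ℕ} (Ω : Set (Fin n → ℝ))
    (hΩo : IsOpen Ω) (hΩne : Ω.Nonempty) (hΩpr : Ω ≠ Set.univ)
    (β c₁ c₂ : ℝ) (hβ0 : 0 < β) (hβ1 : β < 1)
    (hc₁ : 0 < c₁) (hc₁₂ : c₁ < c₂) (hc₂ : c₂ < 1) :
    ∃ M : ℕ, 0 < M ∧
      ∀ (ι : Type) (xc : ι → (Fin n → ℝ)) (lc : ι → ℝ),
        (∀ i, MemF Ω β (xc i) (lc i)) →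
        (Pairwise fun i j => Disjoint (Cube (xc i) (lc i)) (Cube (xc j) (lc j))) →
        (∀ i, c₁ < lc i / Metric.infDist (xc i) Ωᶜ ∧
          lc i / Metric.infDist (xc i) Ωᶜ < c₂) →
        ∀ x ∈ Ω, {i | x ∈ cloud Ω β (xc i) (lc i)}.Finite ∧
          {i | x ∈ cloud Ω β (xc i) (lc i)}.ncard ≤ M :=
  clouds_bounded_overlap_general Ω β c₁ c₂ hβ0 hβ1 hc₁ hc₂
end
end

section
/- Let 1 < p ≤ q < ∞ and 0 < α < β < 1. Let u and v be weights such that u ∈ D_α and σ = v^{-1/(p-1)} ∈ D_α. Then (u,v) ∈ A_{p,q}^β if and only if (u,v) ∈ A_{p,q}^α; that is, the classes A_{p,q}^β and A_{p,q}^α coincide. -/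
open MeasureTheory Metric Set
open scoped ENNReal

noncomputable section

/-!
Cubes of `F_α` belong to `F_β`, so only `A_{p,q}^α ⊆ A_{p,q}^β` needs an argument. Let
`Q = Q(x,l) ∈ F_β` and `r = α(1-β) d(x,Ωᶜ)/4`. Since `l < d(x,Ωᶜ)`, the cube `Q` is covered by
at most `(2N+1)^n` grid cubes of radius `r` centred within `l + r` of `x`, with `N` depending only
on `α, β`; every cube of radius `2r` centred there lies in `F_α`. Chaining the `D_α` inequality
along the segment from `x` to each centre gives `w(Q) ≤ K w(Q(x,r))` for `w = u, σ`, and as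
`Q(x,r) ⊆ Q` is in `F_α`, the `A_{p,q}^α` bound at `Q(x,r)` bounds the characteristic of `Q`.
-/

open AffineMap

theorem measure_closedBall_le_pow_mul_of_doubling_on_segment {E : Type*}
    [NormedAddCommGroup E] [NormedSpace ℝ E] [MeasurableSpace E] (ν : Measure E)
    {x y : E} {r : ℝ} {C : ℝ≥0∞}
    (hD : ∀ z ∈ segment ℝ x y, ν (closedBall z (2 * r)) ≤ C * ν (closedBall z r))
    {m : ℕ} (hm : dist x y ≤ m * r) :
    ν (closedBall y r) ≤ C ^ m * ν (closedBall x r) := by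
  rcases m.eq_zero_or_pos with rfl | hm0
  · obtain rfl : x = y := dist_le_zero.1 (by simpa using hm)
    simp
  have hm0' : (0 : ℝ) < m := by exact_mod_cast hm0
  let z : ℕ → E := fun k => lineMap x y ((k : ℝ) / m)
  have hstep : ∀ k, dist (z (k + 1)) (z k) ≤ r := by
    intro k
    simp only [z, dist_lineMap_lineMap, Real.dist_eq, Nat.cast_succ, add_div, add_sub_cancel_left,
      abs_of_pos (one_div_pos.2 hm0')]
    rw [one_div_mul_eq_div, div_le_iff₀ hm0']
    linarith
  have hseg : ∀ k ≤ m, z k ∈ segment ℝ x y := by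
    intro k hk
    rw [segment_eq_image_lineMap]
    refine ⟨_, ⟨by positivity, div_le_one_of_le₀ (by exact_mod_cast hk) hm0'.le⟩, rfl⟩
  have hchain : ∀ k ≤ m, ν (closedBall (z k) r) ≤ C ^ k * ν (closedBall x r) := by
    intro k
    induction k with
    | zero => intro _; simp [z]
    | succ k ih =>
      intro hk
      calc ν (closedBall (z (k + 1)) r) ≤ ν (closedBall (z k) (2 * r)) :=
            measure_mono (closedBall_subset_closedBall' (by linarith [hstep k]))
        _ ≤ C * ν (closedBall (z k) r) := hD _ (hseg k (by omega))
        _ ≤ C * (C ^ k * ν (closedBall x r)) := by gcongr; exact ih (by omega)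
        _ = C ^ (k + 1) * ν (closedBall x r) := by ring
  simpa [z, hm0'.ne'] using hchain m le_rfl

theorem exists_finset_closedBall_cover {n : ℕ} (x : Fin n → ℝ) {l r : ℝ} (hr : 0 < r) {N : ℕ}
    (hN : l + r ≤ N * r) :
    ∃ s : Finset (Fin n → ℝ), s.card ≤ (2 * N + 1) ^ n ∧ (∀ y ∈ s, dist y x ≤ l + r) ∧
      closedBall x l ⊆ ⋃ y ∈ s, closedBall y r := by
  classical
  let g : (Fin n → ℤ) → Fin n → ℝ := fun z => x + r • fun i => (z i : ℝ)
  let grid := Fintype.piFinset fun _ : Fin n => Finset.Icc (-(N : ℤ)) N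
  refine ⟨(grid.filter fun z => dist (g z) x ≤ l + r).image g, ?_, ?_, ?_⟩
  · calc _ ≤ (grid.filter _).card := Finset.card_image_le
      _ ≤ grid.card := Finset.card_filter_le _ _
      _ = (2 * N + 1) ^ n := by simp only [grid, Fintype.card_piFinset, Int.card_Icc,
          Finset.prod_const, Finset.card_univ, Fintype.card_fin]; congr 1; omega
  · simp only [Finset.mem_image, Finset.mem_filter]
    rintro _ ⟨z, ⟨-, hz⟩, rfl⟩
    exact hz
  · intro p hp
    let z : Fin n → ℤ := fun i => round ((p i - x i) / r)
    have hround : ∀ i, |(p i - x i) / r - z i| ≤ 1 / 2 := fun i => abs_sub_round _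
    have hpz : dist p (g z) ≤ r := by
      refine (dist_pi_le_iff hr.le).2 fun i => ?_
      have : p i - g z i = r * ((p i - x i) / r - z i) := by simp [g]; field_simp; ring
      rw [Real.dist_eq, this, abs_mul, abs_of_pos hr]
      nlinarith [hround i]
    have hz : z ∈ grid := by
      simp only [grid, Fintype.mem_piFinset, Finset.mem_Icc]
      intro i
      have hpx : |p i - x i| ≤ (N - 1) * r := by
        have := dist_le_pi_dist p x i
        rw [Real.dist_eq] at this
        linarith [mem_closedBall.1 hp]
      have hquot : |(p i - x i) / r| ≤ N - 1 := by
        rw [abs_div, abs_of_pos hr, div_le_iff₀ hr]; exact hpx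
      have : |(z i : ℝ)| ≤ N := by
        have := abs_sub_abs_le_abs_sub (z i : ℝ) ((p i - x i) / r)
        rw [abs_sub_comm] at this
        linarith [hround i]
      constructor <;> [exact_mod_cast (abs_le.1 this).1; exact_mod_cast (abs_le.1 this).2]
    refine mem_iUnion₂.2 ⟨g z, Finset.mem_image_of_mem g (Finset.mem_filter.2 ⟨hz, ?_⟩),
      mem_closedBall.2 hpz⟩
    calc dist (g z) x ≤ dist (g z) p + dist p x := dist_triangle _ _ _
      _ ≤ r + l := add_le_add (dist_comm p (g z) ▸ hpz) (mem_closedBall.1 hp)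
      _ = l + r := add_comm r l

theorem MemF.infDist_pos {n : ℕ} {Ω : Set (Fin n → ℝ)} {β : ℝ} {x : Fin n → ℝ} {l : ℝ}
    (hx : MemF Ω β x l) : 0 < infDist x Ωᶜ := by
  obtain ⟨-, hl, hlβ⟩ := hx
  refine infDist_nonneg.lt_of_ne fun h => ?_
  rw [← h, mul_zero] at hlβ
  linarith

theorem MemF.of_le {n : ℕ} {Ω : Set (Fin n → ℝ)} {α β : ℝ} {x : Fin n → ℝ} {l : ℝ}
    (hx : MemF Ω α x l) (hαβ : α ≤ β) : MemF Ω β x l :=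
  ⟨hx.1, hx.2.1, hx.2.2.trans_le (mul_le_mul_of_nonneg_right hαβ infDist_nonneg)⟩

theorem MemF.of_radius_le {n : ℕ} {Ω : Set (Fin n → ℝ)} {β : ℝ} {x : Fin n → ℝ} {l l' : ℝ}
    (hx : MemF Ω β x l') (hl : 0 < l) (hll' : l ≤ l') : MemF Ω β x l :=
  ⟨hx.1, hl, hll'.trans_lt hx.2.2⟩

theorem MemF.of_dist_le {n : ℕ} {Ω : Set (Fin n → ℝ)} {α β : ℝ} {x y : Fin n → ℝ} {l : ℝ}
    (hx : MemF Ω β x l) (hα : 0 < α) (hαβ : α ≤ β) (hβ : β < 1)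
    (hy : dist y x ≤ l + α * (1 - β) * infDist x Ωᶜ / 4) :
    MemF Ω α y (2 * (α * (1 - β) * infDist x Ωᶜ / 4)) := by
  have hd := hx.infDist_pos
  set d := infDist x Ωᶜ
  set r := α * (1 - β) * d / 4
  have hr : 0 < r := by
    have : 0 < 1 - β := by linarith
    positivity
  have hdy : d - dist y x ≤ infDist y Ωᶜ := by
    linarith [infDist_le_infDist_add_dist (s := Ωᶜ) (x := x) (y := y), dist_comm x y]
  have hαd : α * ((1 - β) * d - r) ≤ α * infDist y Ωᶜ :=
    mul_le_mul_of_nonneg_left (by linarith [hx.2.2]) hα.le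
  have h2r : 2 * r < α * infDist y Ωᶜ := by
    have : α * ((1 - β) * d - r) = 4 * r - α * r := by simp only [r]; ring
    nlinarith
  refine ⟨by_contra fun hyΩ => ?_, by positivity, h2r⟩
  rw [infDist_zero_of_mem hyΩ, mul_zero] at h2r
  linarith

theorem measure_closedBall_le_of_doubling {n : ℕ} (ν : Measure (Fin n → ℝ)) {x : Fin n → ℝ}
    {l r : ℝ} {C : ℝ≥0∞} (hr : 0 < r) {N : ℕ} (hN : l + r ≤ N * r)
    (hD : ∀ z ∈ closedBall x (l + r), ν (closedBall z (2 * r)) ≤ C * ν (closedBall z r)) :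
    ν (closedBall x l) ≤ (2 * N + 1) ^ n * C ^ N * ν (closedBall x r) := by
  obtain ⟨s, hcard, hs, hcover⟩ := exists_finset_closedBall_cover x hr hN
  have hchain : ∀ y ∈ s, ν (closedBall y r) ≤ C ^ N * ν (closedBall x r) := by
    intro y hy
    have hseg : segment ℝ x y ⊆ closedBall x (l + r) :=
      (convex_closedBall x _).segment_subset (mem_closedBall_self (dist_nonneg.trans (hs y hy)))
        (hs y hy)
    exact measure_closedBall_le_pow_mul_of_doubling_on_segment ν (fun z hz => hD z (hseg hz))
      ((dist_comm x y).trans_le ((hs y hy).trans hN))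
  calc ν (closedBall x l) ≤ ν (⋃ y ∈ s, closedBall y r) := measure_mono hcover
    _ ≤ ∑ y ∈ s, ν (closedBall y r) := measure_biUnion_finset_le _ _
    _ ≤ ∑ _y ∈ s, C ^ N * ν (closedBall x r) := Finset.sum_le_sum hchain
    _ = s.card * (C ^ N * ν (closedBall x r)) := by rw [Finset.sum_const, nsmul_eq_mul]
    _ ≤ (2 * N + 1) ^ n * (C ^ N * ν (closedBall x r)) := by gcongr; exact_mod_cast hcard
    _ = _ := (mul_assoc _ _ _).symm

theorem wMeas_eq_withDensity {n : ℕ} (w : (Fin n → ℝ) → ℝ) {E : Set (Fin n → ℝ)}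
    (hE : MeasurableSet E) : wMeas w E = volume.withDensity (fun y => ENNReal.ofReal (w y)) E :=
  (withDensity_apply _ hE).symm

theorem Dbeta.exists_wMeas_cube_le {n : ℕ} {Ω : Set (Fin n → ℝ)} {α β : ℝ}
    {w : (Fin n → ℝ) → ℝ} (hD : Dbeta Ω α w) (hα : 0 < α) (hαβ : α ≤ β) (hβ : β < 1) :
    ∃ K : ℝ≥0∞, K ≠ ⊤ ∧ ∀ x l, MemF Ω β x l →
      wMeas w (Cube x l) ≤ K * wMeas w (Cube x (α * (1 - β) * infDist x Ωᶜ / 4)) := by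
  obtain ⟨C, hC, hCD⟩ := hD
  have hβ' : 0 < 1 - β := by linarith
  set N : ℕ := ⌈4 / (α * (1 - β))⌉₊ + 1
  refine ⟨(2 * N + 1) ^ n * C ^ N, by finiteness, fun x l hx => ?_⟩
  have hd := hx.infDist_pos
  set r := α * (1 - β) * infDist x Ωᶜ / 4
  have hr : 0 < r := by positivity
  have hN : l + r ≤ N * r := by
    have hdr : infDist x Ωᶜ = 4 / (α * (1 - β)) * r := by simp only [r]; field_simp
    have := Nat.le_ceil (4 / (α * (1 - β)))
    have : l < 4 / (α * (1 - β)) * r := by nlinarith [hx.2.2]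
    simp only [N, Nat.cast_add, Nat.cast_one]
    nlinarith
  simp only [Cube, wMeas_eq_withDensity w measurableSet_closedBall]
  refine measure_closedBall_le_of_doubling _ hr hN fun y hy => ?_
  have h2r : MemF Ω α y (2 * r) := hx.of_dist_le hα hαβ hβ (mem_closedBall.1 hy)
  simpa only [Cube, wMeas_eq_withDensity w measurableSet_closedBall] using
    (hCD y r (h2r.of_radius_le hr (by linarith)) h2r).1

/-- `Apq Ω β p q u v` unfolds to: `apqChar p q u v` is bounded on the cubes of `F_β`. -/
def apqChar {n : ℕ} (p q : ℝ) (u v : (Fin n → ℝ) → ℝ) (Q : Set (Fin n → ℝ)) : ℝ≥0∞ :=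
  (wMeas u Q / volume Q) ^ (p / q) * (wMeas (sigW v p) Q / volume Q) ^ (p - 1)

theorem apqChar_le_of_subset {n : ℕ} {p q : ℝ} {u v : (Fin n → ℝ) → ℝ}
    {Q Q' : Set (Fin n → ℝ)} {Ku Kσ : ℝ≥0∞} (hpq : 0 ≤ p / q) (hp : 0 ≤ p - 1) (hQ : Q' ⊆ Q)
    (hu : wMeas u Q ≤ Ku * wMeas u Q') (hσ : wMeas (sigW v p) Q ≤ Kσ * wMeas (sigW v p) Q') :
    apqChar p q u v Q ≤ Ku ^ (p / q) * Kσ ^ (p - 1) * apqChar p q u v Q' := by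
  have hvol := measure_mono (μ := volume) hQ
  calc apqChar p q u v Q
      ≤ (Ku * wMeas u Q' / volume Q') ^ (p / q) *
          (Kσ * wMeas (sigW v p) Q' / volume Q') ^ (p - 1) := by
        unfold apqChar; gcongr
    _ = Ku ^ (p / q) * Kσ ^ (p - 1) * apqChar p q u v Q' := by
        simp only [apqChar, mul_div_assoc, ENNReal.mul_rpow_of_nonneg _ _ hpq,
          ENNReal.mul_rpow_of_nonneg _ _ hp]
        ring

theorem Apq.of_le {n : ℕ} {Ω : Set (Fin n → ℝ)} {α β p q : ℝ} {u v : (Fin n → ℝ) → ℝ}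
    (h : Apq Ω β p q u v) (hαβ : α ≤ β) : Apq Ω α p q u v :=
  let ⟨C, hC, hCβ⟩ := h
  ⟨C, hC, fun x l hx => hCβ x l (hx.of_le hαβ)⟩

theorem Apq_classes_coincide_general {n : ℕ} (Ω : Set (Fin n → ℝ))
    (p q α β : ℝ) (hp : 1 < p) (hpq : p ≤ q)
    (hα0 : 0 < α) (hαβ : α < β) (hβ1 : β < 1)
    (u v : (Fin n → ℝ) → ℝ)
    (huD : Dbeta Ω α u) (hσD : Dbeta Ω α (sigW v p)) :
    Apq Ω β p q u v ↔ Apq Ω α p q u v := by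
  refine ⟨fun h => h.of_le hαβ.le, ?_⟩
  rintro ⟨C, hC, hCα⟩
  obtain ⟨Ku, hKu, hu⟩ := huD.exists_wMeas_cube_le hα0 hαβ.le hβ1
  obtain ⟨Kσ, hKσ, hσ⟩ := hσD.exists_wMeas_cube_le hα0 hαβ.le hβ1
  have hpq' : 0 ≤ p / q := div_nonneg (by linarith) (by linarith)
  have hp' : 0 ≤ p - 1 := by linarith
  refine ⟨max C (Ku ^ (p / q) * Kσ ^ (p - 1) * C), by finiteness, fun x l hx => ?_⟩
  by_cases hl : l < α * infDist x Ωᶜ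
  · exact (hCα x l ⟨hx.1, hx.2.1, hl⟩).trans (le_max_left _ _)
  set r := α * (1 - β) * infDist x Ωᶜ / 4
  have hr : MemF Ω α x r := by
    have hr0 : 0 < r := by
      have := hx.infDist_pos
      have : 0 < 1 - β := by linarith
      positivity
    have h2r : MemF Ω α x (2 * r) :=
      hx.of_dist_le hα0 hαβ.le hβ1 (show dist x x ≤ l + r by rw [dist_self]; linarith [hx.2.1])
    exact h2r.of_radius_le hr0 (by linarith)
  have hrl : r ≤ l := by linarith [hr.2.2, not_lt.1 hl]
  calc apqChar p q u v (Cube x l)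
      ≤ Ku ^ (p / q) * Kσ ^ (p - 1) * apqChar p q u v (Cube x r) :=
        apqChar_le_of_subset hpq' hp' (closedBall_subset_closedBall hrl) (hu x l hx) (hσ x l hx)
    _ ≤ max C (Ku ^ (p / q) * Kσ ^ (p - 1) * C) :=
        le_max_of_le_right (by gcongr; exact hCα x r hr)

/-- Lemma 4.1: if `u ∈ D_α` and `σ = v^{-1/(p-1)} ∈ D_α`
with `0 < α < β < 1`, then `(u,v) ∈ A_{p,q}^β ↔ (u,v) ∈ A_{p,q}^α`. -/
theorem Apq_classes_coincide {n : ℕ} (Ω : Set (Fin n → ℝ))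
    (hΩo : IsOpen Ω) (hΩne : Ω.Nonempty) (hΩpr : Ω ≠ Set.univ)
    (p q α β : ℝ) (hp : 1 < p) (hpq : p ≤ q)
    (hα0 : 0 < α) (hαβ : α < β) (hβ1 : β < 1)
    (u v : (Fin n → ℝ) → ℝ) (hu : IsWeight Ω u) (hv : IsWeight Ω v)
    (huD : Dbeta Ω α u) (hσD : Dbeta Ω α (sigW v p)) :
    Apq Ω β p q u v ↔ Apq Ω α p q u v :=
  Apq_classes_coincide_general Ω p q α β hp hpq hα0 hαβ hβ1 u v huD hσD
end
end

section
/- Let 0 < β < 1 and let σ be a weight in A_∞^β. Then σ satisfies a reverse Hölder inequality on F_β: there exist ε > 0 and a constant C such that (|Q|^{-1} ∫_Q σ^{1+ε})^{1/(1+ε)} ≤ C·|Q|^{-1} ∫_Q σ for every cube Q ∈ F_β. -/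
open MeasureTheory Metric Set
open scoped ENNReal

noncomputable section

/-!
Chebyshev's inequality and the `A_∞` condition with exponent `δ < 1` give, on a cube `Q`,
`t |{σ ≥ t} ∩ Q| ≤ c (|{σ ≥ t} ∩ Q| / |Q|)^δ σ(Q)`, that is, the weak-type bound
`|{σ ≥ t} ∩ Q| ≤ |Q| (c σ_Q / t)^r` with `r = 1 / (1 - δ) > 1`, where `σ_Q` is the average of
`σ` over `Q`. Integrating `p t^(p-1)` against this tail bound above `t = c σ_Q`, and against the
trivial bound `|Q|` below it (layer cake), gives `⨍_Q σ^p ≤ r / (r - p) (c σ_Q)^p` for every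
`p < r`; take `p = 1 + δ`.
-/

lemma lintegral_Ioc_zero_rpow_sub_one {p K : ℝ} (hp : 0 < p) (hK : 0 ≤ K) :
    ∫⁻ t in Ioc 0 K, ENNReal.ofReal (t ^ (p - 1)) = ENNReal.ofReal (K ^ p / p) := by
  have hint : IntegrableOn (fun t : ℝ => t ^ (p - 1)) (Ioc 0 K) := by
    rw [← intervalIntegrable_iff_integrableOn_Ioc_of_le hK]
    exact intervalIntegral.intervalIntegrable_rpow' (by linarith)
  rw [← ofReal_integral_eq_lintegral_ofReal hint
      ((ae_restrict_iff' measurableSet_Ioc).2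
        (ae_of_all _ fun t ht => Real.rpow_nonneg ht.1.le _)),
    ← intervalIntegral.integral_of_le hK, integral_rpow (Or.inl (by linarith)), sub_add_cancel,
    Real.zero_rpow hp.ne', sub_zero]

lemma lintegral_Ioi_rpow_of_lt {s K : ℝ} (hs : s < -1) (hK : 0 < K) :
    ∫⁻ t in Ioi K, ENNReal.ofReal (t ^ s) = ENNReal.ofReal (-K ^ (s + 1) / (s + 1)) := by
  rw [← ofReal_integral_eq_lintegral_ofReal (integrableOn_Ioi_rpow_of_lt hs hK)
      ((ae_restrict_iff' measurableSet_Ioi).2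
        (ae_of_all _ fun t ht => Real.rpow_nonneg (hK.trans ht).le _)),
    integral_Ioi_rpow_of_lt hs hK]

theorem lintegral_rpow_le_of_meas_le_rpow {α : Type*} [MeasurableSpace α] {ν : Measure α}
    {f : α → ℝ} (hf0 : 0 ≤ᵐ[ν] f) (hf : AEMeasurable f ν) {p r K : ℝ} (hp : 0 < p)
    (hpr : p < r) (hK : 0 < K)
    (hdist : ∀ t, K < t → ν {y | t ≤ f y} ≤ ν univ * ENNReal.ofReal ((K / t) ^ r)) :
    ∫⁻ y, ENNReal.ofReal (f y ^ p) ∂ν ≤ ENNReal.ofReal (r / (r - p) * K ^ p) * ν univ := by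
  set g : ℝ → ℝ≥0∞ := fun t => ν {y | t ≤ f y} * ENNReal.ofReal (t ^ (p - 1))
  have hlow : ∫⁻ t in Ioc 0 K, g t ≤ ν univ * ENNReal.ofReal (K ^ p / p) := by
    rw [← lintegral_Ioc_zero_rpow_sub_one hp hK.le, ← lintegral_const_mul _ (by fun_prop)]
    exact lintegral_mono fun t => mul_le_mul_left (measure_mono (subset_univ _)) _
  have hhigh :
      ∫⁻ t in Ioi K, g t ≤ ν univ * ENNReal.ofReal (K ^ r * (K ^ (p - r) / (r - p))) := by
    calc ∫⁻ t in Ioi K, g t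
        ≤ ∫⁻ t in Ioi K,
            ν univ * (ENNReal.ofReal (K ^ r) * ENNReal.ofReal (t ^ (p - 1 - r))) := by
          refine setLIntegral_mono (by fun_prop) fun t (ht : K < t) => ?_
          have ht0 : 0 < t := hK.trans ht
          calc g t ≤ ν univ * ENNReal.ofReal ((K / t) ^ r) * ENNReal.ofReal (t ^ (p - 1)) :=
                mul_le_mul_left (hdist t ht) _
            _ = _ := by
                rw [mul_assoc, ← ENNReal.ofReal_mul (by positivity),
                  ← ENNReal.ofReal_mul (by positivity), Real.div_rpow hK.le ht0.le,
                  Real.rpow_sub ht0 (p - 1), div_mul_eq_mul_div, mul_div_assoc]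
      _ = ν univ * ENNReal.ofReal (K ^ r * (K ^ (p - r) / (r - p))) := by
          rw [lintegral_const_mul _ (by fun_prop), lintegral_const_mul _ (by fun_prop),
            lintegral_Ioi_rpow_of_lt (by linarith) hK, ← ENNReal.ofReal_mul (by positivity),
            show p - 1 - r + 1 = p - r by ring, neg_div, ← div_neg, neg_sub]
  rw [lintegral_rpow_eq_lintegral_meas_le_mul ν hf0 hf hp, ← Ioc_union_Ioi_eq_Ioi hK.le,
    lintegral_union measurableSet_Ioi Ioc_disjoint_Ioi_same]
  calc ENNReal.ofReal p * ((∫⁻ t in Ioc 0 K, g t) + ∫⁻ t in Ioi K, g t)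
      ≤ ENNReal.ofReal p * (ν univ * ENNReal.ofReal (K ^ p / p)
          + ν univ * ENNReal.ofReal (K ^ r * (K ^ (p - r) / (r - p)))) := by gcongr
    _ = ENNReal.ofReal (r / (r - p) * K ^ p) * ν univ := by
      have hrp : 0 < r - p := by linarith
      rw [← mul_add, ← ENNReal.ofReal_add (by positivity) (by positivity), mul_left_comm,
        ← ENNReal.ofReal_mul hp.le, mul_comm, ← mul_div_assoc, ← Real.rpow_add hK,
        add_sub_cancel]
      congr 2
      field_simp
      ring

lemma ENNReal.le_rpow_of_mul_le_mul_rpow {s t K : ℝ≥0∞} {δ : ℝ} (hδ0 : 0 < δ) (hδ1 : δ < 1)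
    (hs : s ≠ ⊤) (ht0 : t ≠ 0) (ht : t ≠ ⊤) (hst : t * s ≤ K * s ^ δ) :
    s ≤ (K / t) ^ (1 - δ)⁻¹ := by
  rcases eq_or_ne s 0 with rfl | hs0
  · exact bot_le
  have hsδ0 : s ^ δ ≠ 0 := by simp [ENNReal.rpow_eq_zero_iff, hs0, hδ0.le.not_gt]
  have hsδ : s ^ δ ≠ ⊤ := ENNReal.rpow_ne_top_of_nonneg hδ0.le hs
  have hsplit : t * s = t * s ^ (1 - δ) * s ^ δ := by
    rw [mul_assoc, ← ENNReal.rpow_add _ _ hs0 hs, sub_add_cancel, ENNReal.rpow_one]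
  have hs' : s ^ (1 - δ) ≤ K / t := by
    rw [ENNReal.le_div_iff_mul_le (Or.inl ht0) (Or.inl ht), mul_comm]
    exact (ENNReal.mul_le_mul_iff_left hsδ0 hsδ).1 (hsplit ▸ hst)
  calc s = (s ^ (1 - δ)) ^ (1 - δ)⁻¹ := by
        rw [← ENNReal.rpow_mul, mul_inv_cancel₀ (by linarith), ENNReal.rpow_one]
    _ ≤ (K / t) ^ (1 - δ)⁻¹ := ENNReal.rpow_le_rpow hs' (inv_nonneg.2 (by linarith))

section AInfty

variable {α : Type*} [MeasurableSpace α] {μ : Measure α} {f : α → ℝ} {Q : Set α} {c δ : ℝ}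

/-- The inequality defining `AinfB`, on a single set `Q` and for an arbitrary measure. -/
def IsAInftyOn (μ : Measure α) (f : α → ℝ) (Q : Set α) (c δ : ℝ) : Prop :=
  ∀ E, MeasurableSet E → E ⊆ Q →
    ∫⁻ y in E, ENNReal.ofReal (f y) ∂μ
      ≤ ENNReal.ofReal c * (μ E / μ Q) ^ δ * ∫⁻ y in Q, ENNReal.ofReal (f y) ∂μ

lemma IsAInftyOn.mono_exponent {δ' : ℝ} (hA : IsAInftyOn μ f Q c δ) (hδ' : δ' ≤ δ) :
    IsAInftyOn μ f Q c δ' := fun E hE hEQ =>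
  (hA E hE hEQ).trans <| mul_le_mul_left (mul_le_mul_right (ENNReal.rpow_le_rpow_of_exponent_ge
    (ENNReal.div_le_of_le_mul (by rw [one_mul]; exact measure_mono hEQ)) hδ') _) _

lemma IsAInftyOn.measure_superlevel_le (hA : IsAInftyOn μ f Q c δ) (hf : Measurable f)
    (hQ : MeasurableSet Q) (hQ0 : μ Q ≠ 0) (hQtop : μ Q ≠ ⊤) (hδ0 : 0 < δ) (hδ1 : δ < 1)
    {t : ℝ} (ht : 0 < t) :
    μ ({y | t ≤ f y} ∩ Q)
      ≤ (ENNReal.ofReal c * (⨍⁻ y in Q, ENNReal.ofReal (f y) ∂μ) / ENNReal.ofReal t)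
          ^ (1 - δ)⁻¹ * μ Q := by
  set E := {y | t ≤ f y} ∩ Q
  have hEQ : E ⊆ Q := inter_subset_right
  have hE : MeasurableSet E := (measurableSet_le measurable_const hf).inter hQ
  have hcheb : ENNReal.ofReal t * μ E ≤ ∫⁻ y in E, ENNReal.ofReal (f y) ∂μ := by
    rw [← setLIntegral_const]
    exact setLIntegral_mono hf.ennreal_ofReal fun y hy => ENNReal.ofReal_le_ofReal hy.1
  have hrel : ENNReal.ofReal t * (μ E / μ Q)
      ≤ ENNReal.ofReal c * (⨍⁻ y in Q, ENNReal.ofReal (f y) ∂μ) * (μ E / μ Q) ^ δ := by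
    calc ENNReal.ofReal t * (μ E / μ Q)
        = ENNReal.ofReal t * μ E / μ Q := (mul_div_assoc ..).symm
      _ ≤ ENNReal.ofReal c * (μ E / μ Q) ^ δ * (∫⁻ y in Q, ENNReal.ofReal (f y) ∂μ) / μ Q :=
          ENNReal.div_le_div_right (hcheb.trans (hA E hE hEQ)) _
      _ = _ := by simp only [setLAverage_eq, div_eq_mul_inv]; ring
  calc μ E = μ E / μ Q * μ Q := (ENNReal.div_mul_cancel hQ0 hQtop).symm
    _ ≤ _ := by
      gcongr
      exact ENNReal.le_rpow_of_mul_le_mul_rpow hδ0 hδ1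
        (ENNReal.div_lt_top ((measure_mono hEQ).trans_lt hQtop.lt_top).ne hQ0).ne
        (by simpa using ht) ENNReal.ofReal_ne_top hrel

lemma setLAverage_rpow_eq_zero {g : α → ℝ≥0∞} (hg : AEMeasurable g (μ.restrict Q))
    (hQtop : μ Q ≠ ⊤) {p : ℝ} (hp : 0 < p) (h0 : ⨍⁻ y in Q, g y ∂μ = 0) :
    ⨍⁻ y in Q, g y ^ p ∂μ = 0 := by
  rw [setLAverage_eq, ENNReal.div_eq_zero_iff, lintegral_eq_zero_iff' hg] at h0
  rw [setLAverage_eq, ENNReal.div_eq_zero_iff, lintegral_eq_zero_iff' (hg.pow_const p)]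
  left
  filter_upwards [h0.resolve_right hQtop] with y hy
  simp [hy, hp]

theorem IsAInftyOn.setLAverage_rpow_le (hA : IsAInftyOn μ f Q c δ) (hf0 : ∀ y, 0 ≤ f y)
    (hf : Measurable f) (hQ : MeasurableSet Q) (hQ0 : μ Q ≠ 0) (hQtop : μ Q ≠ ⊤) (hc : 0 < c)
    (hδ0 : 0 < δ) (hδ1 : δ < 1) {p : ℝ} (hp : 0 < p) (hpr : p < (1 - δ)⁻¹) :
    (⨍⁻ y in Q, ENNReal.ofReal (f y) ^ p ∂μ) ^ (1 / p)
      ≤ ENNReal.ofReal (((1 - δ)⁻¹ / ((1 - δ)⁻¹ - p)) ^ (1 / p) * c)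
          * ⨍⁻ y in Q, ENNReal.ofReal (f y) ∂μ := by
  set r := (1 - δ)⁻¹
  set A := ⨍⁻ y in Q, ENNReal.ofReal (f y) ∂μ
  have hC : 0 < (r / (r - p)) ^ (1 / p) * c := by
    have hrp : 0 < r - p := by linarith
    positivity
  rcases eq_or_ne A ⊤ with hAtop | hAtop
  · rw [hAtop, ENNReal.mul_top (by simpa using hC)]
    exact le_top
  rcases eq_or_ne A 0 with hA0 | hA0
  · rw [setLAverage_rpow_eq_zero hf.ennreal_ofReal.aemeasurable hQtop hp hA0,
      ENNReal.zero_rpow_of_pos (by positivity)]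
    exact bot_le
  set K := c * A.toReal with hKdef
  have hK : 0 < K := mul_pos hc (ENNReal.toReal_pos hA0 hAtop)
  have hdist : ∀ t, K < t → μ.restrict Q {y | t ≤ f y}
      ≤ μ.restrict Q univ * ENNReal.ofReal ((K / t) ^ r) := by
    intro t ht
    have ht0 : 0 < t := hK.trans ht
    rw [Measure.restrict_apply (measurableSet_le measurable_const hf),
      Measure.restrict_apply_univ, mul_comm,
      ← ENNReal.ofReal_rpow_of_nonneg (by positivity) (by linarith), ENNReal.ofReal_div_of_pos ht0,
      hKdef, ENNReal.ofReal_mul hc.le, ENNReal.ofReal_toReal hAtop]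
    exact hA.measure_superlevel_le hf hQ hQ0 hQtop hδ0 hδ1 ht0
  have hint := lintegral_rpow_le_of_meas_le_rpow (ae_of_all _ hf0) hf.aemeasurable hp hpr hK hdist
  rw [Measure.restrict_apply_univ] at hint
  calc (⨍⁻ y in Q, ENNReal.ofReal (f y) ^ p ∂μ) ^ (1 / p)
      ≤ (ENNReal.ofReal (r / (r - p) * K ^ p)) ^ (1 / p) := by
        gcongr
        rw [setLAverage_eq, ENNReal.div_le_iff hQ0 hQtop]
        simpa only [ENNReal.ofReal_rpow_of_nonneg (hf0 _) hp.le] using hint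
    _ = ENNReal.ofReal ((r / (r - p)) ^ (1 / p) * c) * A := by
        rw [ENNReal.ofReal_rpow_of_nonneg (by positivity) (by positivity),
          Real.mul_rpow (by positivity) (by positivity), ← Real.rpow_mul hK.le,
          mul_one_div_cancel hp.ne', Real.rpow_one, ← mul_assoc,
          ENNReal.ofReal_mul (by positivity), ENNReal.ofReal_toReal hAtop]

end AInfty

theorem AinfB_reverse_holder_general {n : ℕ} (Ω : Set (Fin n → ℝ))
    (β : ℝ)
    (σ : (Fin n → ℝ) → ℝ) (hσw : IsWeight Ω σ) (hσA : AinfB Ω β σ) :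
    ∃ (ε : ℝ) (C : ℝ≥0∞), 0 < ε ∧ C ≠ ⊤ ∧ ∀ x l, MemF Ω β x l →
      ((volume (Cube x l))⁻¹ *
          ∫⁻ y in Cube x l, ENNReal.ofReal (σ y) ^ (1 + ε)) ^ (1 / (1 + ε))
        ≤ C * ((volume (Cube x l))⁻¹ * ∫⁻ y in Cube x l, ENNReal.ofReal (σ y)) := by
  obtain ⟨hσ0, hσm, -⟩ := hσw
  obtain ⟨c, δ₀, hc, hδ₀, hA⟩ := hσA
  set δ := min δ₀ (1 / 2)
  have hδ0 : 0 < δ := lt_min hδ₀ one_half_pos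
  have hδ1 : δ < 1 := (min_le_right _ _).trans_lt (by norm_num)
  have hp : 1 + δ < (1 - δ)⁻¹ := by
    rw [lt_inv_comm₀ (by linarith) (by linarith), inv_eq_one_div, lt_div_iff₀ (by linarith)]
    nlinarith
  refine ⟨δ, ENNReal.ofReal (((1 - δ)⁻¹ / ((1 - δ)⁻¹ - (1 + δ))) ^ (1 / (1 + δ)) * c), hδ0,
    ENNReal.ofReal_ne_top, fun x l hQ => ?_⟩
  have hQA : IsAInftyOn volume σ (Cube x l) c δ :=
    IsAInftyOn.mono_exponent (hA x l hQ) (min_le_left _ _)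
  simpa only [setLAverage_eq, ENNReal.div_eq_inv_mul] using
    hQA.setLAverage_rpow_le hσ0 hσm measurableSet_closedBall
      (measure_closedBall_pos volume x hQ.2.1).ne' measure_closedBall_lt_top.ne hc hδ0 hδ1
      (by linarith) hp

/-- Lemma 4.2: a weight `σ ∈ A_∞^β` satisfies a reverse
Hölder inequality on the cubes of `F_β`. -/
theorem AinfB_reverse_holder {n : ℕ} (Ω : Set (Fin n → ℝ))
    (hΩo : IsOpen Ω) (hΩne : Ω.Nonempty) (hΩpr : Ω ≠ Set.univ)
    (β : ℝ) (hβ0 : 0 < β) (hβ1 : β < 1)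
    (σ : (Fin n → ℝ) → ℝ) (hσw : IsWeight Ω σ) (hσA : AinfB Ω β σ) :
    ∃ (ε : ℝ) (C : ℝ≥0∞), 0 < ε ∧ C ≠ ⊤ ∧ ∀ x l, MemF Ω β x l →
      ((volume (Cube x l))⁻¹ *
          ∫⁻ y in Cube x l, ENNReal.ofReal (σ y) ^ (1 + ε)) ^ (1 / (1 + ε))
        ≤ C * ((volume (Cube x l))⁻¹ * ∫⁻ y in Cube x l, ENNReal.ofReal (σ y)) :=
  AinfB_reverse_holder_general Ω β σ hσw hσA
end
end
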